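/- arXiv:2103.13571 — 9 statements merged into one kernel-verified Lean document; each statement's English description precedes it below -/
import Mathlib

section
/- Let k ≥ 1 be an integer and let t ≥ k be a real number. If ℱ is a family of k-element sets with |ℱ| ≥ C(t,k), then |∂ℱ| ≥ C(t,k−1). -/
/-- Generalized (real) binomial coefficient `C(y, j) = y(y-1)⋯(y-j+1)/j!`. -/
noncomputable def realBinom (y : ℝ) (j : ℕ) : ℝ :=
  (∏ i ∈ Finset.range j, (y - i)) / (Nat.factorial j)

open Finset


lemma realBinom_zero (y : ℝ) : realBinom y 0 = 1 := by
  simp [realBinom]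

lemma prod_desc_self : ∀ n : ℕ, ∏ i ∈ range n, ((n : ℝ) - i) = n.factorial := by
  intro n
  induction n with
  | zero => simp
  | succ n ih =>
    rw [Finset.prod_range_succ']
    have : ∀ i ∈ range n, ((((n:ℕ)+1 : ℕ)):ℝ) - ((i+1 : ℕ):ℝ) = (n:ℝ) - i := by
      intro i _; push_cast; ring
    rw [Finset.prod_congr rfl this, ih, Nat.factorial_succ]
    push_cast; ring

lemma prod_desc_succ (n : ℕ) : ∏ i ∈ range n, ((n : ℝ) + 1 - i) = (n+1).factorial := by
  induction n with
  | zero => simp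
  | succ n ih =>
    rw [Finset.prod_range_succ']
    have : ∀ i ∈ range n, (((n:ℕ)+1 : ℕ):ℝ) + 1 - ((i+1 : ℕ):ℝ) = (n:ℝ) + 1 - i := by
      intro i _; push_cast; ring
    rw [Finset.prod_congr rfl this, ih]
    have h2 : ((n:ℕ)+1+1).factorial = (n+1+1) * (n+1).factorial := Nat.factorial_succ _
    rw [h2]
    push_cast; ring

lemma realBinom_self (k : ℕ) : realBinom (k : ℝ) k = 1 := by
  rw [realBinom, prod_desc_self]
  exact div_self (by positivity)

lemma realBinom_pred (k : ℕ) (hk : 1 ≤ k) : realBinom (k : ℝ) (k - 1) = k := by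
  obtain ⟨m, rfl⟩ : ∃ m, k = m + 1 := ⟨k - 1, by omega⟩
  simp only [Nat.add_sub_cancel, realBinom]
  have : ∀ i ∈ range m, ((m + 1 : ℕ) : ℝ) - i = (m:ℝ) + 1 - i := by intro i _; push_cast; ring
  rw [Finset.prod_congr rfl this, prod_desc_succ, Nat.factorial_succ]
  push_cast
  rw [mul_div_assoc, div_self (by positivity)]
  ring

lemma realBinom_pos {y : ℝ} {j : ℕ} (h : (j : ℝ) - 1 < y) : 0 < realBinom y j := by
  apply div_pos
  · apply Finset.prod_pos
    intro i hi
    rw [mem_range] at hi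
    have : (i:ℝ) + 1 ≤ (j:ℝ) := by exact_mod_cast hi
    linarith
  · positivity

lemma realBinom_nonneg {y : ℝ} {j : ℕ} (h : (j : ℝ) - 1 ≤ y) : 0 ≤ realBinom y j := by
  apply div_nonneg _ (by positivity)
  apply Finset.prod_nonneg
  intro i hi
  rw [mem_range] at hi
  have : (i:ℝ) + 1 ≤ (j:ℝ) := by exact_mod_cast hi
  linarith

lemma realBinom_mono {y z : ℝ} {j : ℕ} (hy : (j : ℝ) - 1 ≤ y) (hyz : y ≤ z) :
    realBinom y j ≤ realBinom z j := by
  apply div_le_div_of_nonneg_right ?_ (by positivity)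
  case _ =>
    apply Finset.prod_le_prod
    · intro i hi
      rw [mem_range] at hi
      have : (i:ℝ) + 1 ≤ (j:ℝ) := by exact_mod_cast hi
      linarith
    · intro i _; linarith

lemma realBinom_pascal (y : ℝ) (j : ℕ) (hj : 1 ≤ j) :
    realBinom y j = realBinom (y - 1) j + realBinom (y - 1) (j - 1) := by
  obtain ⟨m, rfl⟩ : ∃ m, j = m + 1 := ⟨j - 1, by omega⟩
  simp only [Nat.add_sub_cancel, realBinom]
  set P : ℝ := ∏ i ∈ range m, (y - 1 - i) with hP
  have h1 : ∏ i ∈ range (m+1), (y - i) = y * P := by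
    rw [Finset.prod_range_succ']
    have : ∀ i ∈ range m, (y - ((i+1 : ℕ):ℝ)) = y - 1 - i := by intro i _; push_cast; ring
    rw [Finset.prod_congr rfl this]
    push_cast [hP]; ring
  have h2 : ∏ i ∈ range (m+1), (y - 1 - i) = P * (y - 1 - m) := Finset.prod_range_succ _ _
  rw [h1, h2]
  have hf : ((m+1).factorial : ℝ) = (m+1) * m.factorial := by
    rw [Nat.factorial_succ]; push_cast; ring
  rw [hf]
  have hm : (m.factorial : ℝ) ≠ 0 := by positivity
  have hm1 : ((m:ℝ)+1) ≠ 0 := by positivity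
  field_simp
  ring


lemma exists_compressed {α : Type*} [DecidableEq α] (x : α) (k : ℕ) :
    ∀ n (ℱ : Finset (Finset α)), (ℱ.filter (fun F => x ∉ F)).card ≤ n →
    (∀ F ∈ ℱ, F.card = k) →
    ∃ ℬ : Finset (Finset α), ℬ.card = ℱ.card ∧
      (Finset.shadow ℬ).card ≤ (Finset.shadow ℱ).card ∧
      (∀ F ∈ ℬ, F.card = k) ∧
      (∀ F ∈ ℬ, ∀ y ∈ F, x ∉ F → insert x (F.erase y) ∈ ℬ) := by
  intro n
  induction n with
  | zero =>
    intro ℱ hn hk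
    refine ⟨ℱ, rfl, le_rfl, hk, fun F hF y hy hxF => ?_⟩
    exfalso
    have : F ∈ ℱ.filter (fun F => x ∉ F) := mem_filter.2 ⟨hF, hxF⟩
    have := card_pos.2 ⟨F, this⟩
    omega
  | succ n ih =>
    intro ℱ hn hk
    by_cases hcomp : ∀ F ∈ ℱ, ∀ y ∈ F, x ∉ F → insert x (F.erase y) ∈ ℱ
    · exact ⟨ℱ, rfl, le_rfl, hk, hcomp⟩
    · push_neg at hcomp
      obtain ⟨F, hF, y, hy, hxF, hnotin⟩ := hcomp
      have hxy : x ≠ y := fun h => hxF (h ▸ hy)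
      set ℱ' := UV.compression ({x} : Finset α) ({y} : Finset α) ℱ with hℱ'
      have hcF : UV.compress ({x} : Finset α) {y} F = insert x (F.erase y) := by
        rw [UV.compress_of_disjoint_of_le (disjoint_singleton_left.2 hxF)
          (singleton_subset_iff.2 hy)]
        ext a
        simp only [sup_eq_union, mem_sdiff, mem_union, mem_singleton, mem_insert, mem_erase]
        constructor
        · rintro ⟨h1 | h2, h3⟩
          · exact Or.inr ⟨h3, h1⟩
          · exact Or.inl h2
        · rintro (rfl | ⟨h1, h2⟩)
          · exact ⟨Or.inr rfl, hxy⟩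
          · exact ⟨Or.inl h2, h1⟩
      -- F is not in ℱ'
      have hFnot : F ∉ ℱ' := by
        intro hFin
        rw [hℱ', UV.mem_compression] at hFin
        rcases hFin with ⟨_, h2⟩ | ⟨h1, _⟩
        · rw [hcF] at h2; exact hnotin h2
        · exact h1 hF
      -- every x-free member of ℱ' is in ℱ
      have hsub : ℱ'.filter (fun F => x ∉ F) ⊆ ℱ.filter (fun F => x ∉ F) := by
        intro G hG
        rw [mem_filter] at hG ⊢
        obtain ⟨hG1, hG2⟩ := hG
        refine ⟨?_, hG2⟩
        rw [hℱ', UV.mem_compression] at hG1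
        rcases hG1 with ⟨h1, _⟩ | ⟨h1, b, hb, hcb⟩
        · exact h1
        · rw [UV.compress] at hcb
          split_ifs at hcb with hcond
          · exfalso
            apply hG2
            rw [← hcb]
            refine mem_sdiff.2 ⟨mem_union.2 (Or.inr (mem_singleton_self x)), ?_⟩
            simpa using hxy
          · exact hcb ▸ hb
      have hmeas : (ℱ'.filter (fun F => x ∉ F)).card < (ℱ.filter (fun F => x ∉ F)).card := by
        apply card_lt_card
        rw [Finset.ssubset_iff_of_subset hsub]
        exact ⟨F, mem_filter.2 ⟨hF, hxF⟩, fun h => hFnot (mem_filter.1 h).1⟩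
      have hsized' : ∀ G ∈ ℱ', G.card = k := by
        intro G hG
        rw [hℱ', UV.mem_compression] at hG
        rcases hG with ⟨h1, _⟩ | ⟨_, b, hb, hcb⟩
        · exact hk G h1
        · rw [← hcb, UV.card_compress (by simp)]
          exact hk b hb
      obtain ⟨ℬ, hc1, hc2, hc3, hc4⟩ := ih ℱ' (by omega) hsized'
      refine ⟨ℬ, ?_, ?_, hc3, hc4⟩
      · rw [hc1, hℱ', UV.card_compression]
      · refine hc2.trans ?_
        apply UV.card_shadow_compression_le
        intro a ha
        rw [mem_singleton] at ha
        subst ha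
        exact ⟨y, mem_singleton_self y, by
          simpa [Finset.erase_singleton] using UV.isCompressed_self (∅ : Finset α) ℱ⟩

lemma lovasz_aux {α : Type*} [DecidableEq α] :
    ∀ N k, 1 ≤ k → ∀ ℱ : Finset (Finset α), k + ℱ.card ≤ N →
    ∀ t : ℝ, (k : ℝ) - 1 ≤ t → ℱ.Nonempty → (∀ F ∈ ℱ, F.card = k) →
    realBinom t k ≤ (ℱ.card : ℝ) →
    realBinom t (k - 1) ≤ ((Finset.shadow ℱ).card : ℝ) := by
  intro N
  induction N with
  | zero => intro k hk ℱ hN; omega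
  | succ N ih =>
    intro k hk1 ℱ hN t ht hne hunif hsize
    rcases eq_or_lt_of_le hk1 with hk1' | hk2
    · -- k = 1
      subst hk1'
      rw [show (1 : ℕ) - 1 = 0 from rfl, realBinom_zero]
      obtain ⟨F, hF⟩ := hne
      obtain ⟨y, hy⟩ := card_pos.1 (show 0 < F.card by rw [hunif F hF]; omega)
      have : 0 < (Finset.shadow ℱ).card :=
        card_pos.2 ⟨F.erase y, erase_mem_shadow hF hy⟩
      exact_mod_cast this
    · -- k ≥ 2
      have hkcast : ((k - 1 : ℕ) : ℝ) = (k : ℝ) - 1 := by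
        push_cast [Nat.cast_sub hk1]; ring
      by_cases htk : t ≤ (k : ℝ)
      · -- base case: t ≤ k, bound by k
        have h1 : realBinom t (k - 1) ≤ realBinom (k : ℝ) (k - 1) := by
          apply realBinom_mono _ htk
          rw [hkcast]; linarith
        rw [realBinom_pred k hk1] at h1
        refine h1.trans ?_
        obtain ⟨F, hF⟩ := hne
        have hinj : Set.InjOn (fun y => F.erase y) ↑F := by
          intro y hy y' hy' h
          have h2 : F.erase y = F.erase y' := h
          by_contra hne'
          have hy'' : y' ∈ F.erase y := mem_erase.2 ⟨fun hc => hne' hc.symm, hy'⟩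
          rw [h2] at hy''
          exact (mem_erase.1 hy'').1 rfl
        have hsubs : F.image (fun y => F.erase y) ⊆ Finset.shadow ℱ := by
          intro S hS
          obtain ⟨y, hy, rfl⟩ := mem_image.1 hS
          exact erase_mem_shadow hF hy
        have := card_le_card hsubs
        rw [card_image_of_injOn hinj, hunif F hF] at this
        exact_mod_cast this
      · push_neg at htk
        -- main case: t > k
        obtain ⟨F₀, hF₀⟩ := hne
        obtain ⟨x, hx⟩ := card_pos.1 (show 0 < F₀.card by rw [hunif F₀ hF₀]; omega)
        obtain ⟨ℬ, hcardB, hshadB, hsizedB, hcompr⟩ :=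
          exists_compressed x k _ ℱ le_rfl hunif
        have hBne : ℬ.Nonempty := card_pos.1 (hcardB ▸ card_pos.2 ⟨F₀, hF₀⟩)
        have hxcov : ∃ G ∈ ℬ, x ∈ G := by
          obtain ⟨G, hG⟩ := hBne
          by_cases hxG : x ∈ G
          · exact ⟨G, hG, hxG⟩
          · obtain ⟨y, hy⟩ := card_pos.1 (show 0 < G.card by rw [hsizedB G hG]; omega)
            exact ⟨_, hcompr G hG y hy hxG, mem_insert_self x _⟩
        set ℬ₁ := ℬ.filter (fun F => x ∈ F) with hℬ₁
        set ℬ₀ := ℬ.filter (fun F => ¬ x ∈ F) with hℬ₀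
        set ℬx := ℬ₁.image (fun F => F.erase x) with hℬx
        have hB1mem : ∀ G ∈ ℬ₁, G ∈ ℬ ∧ x ∈ G := fun G hG => mem_filter.1 hG
        have hcard1 : ℬx.card = ℬ₁.card := by
          apply card_image_of_injOn
          intro F hF F' hF' h
          have hee : F.erase x = F'.erase x := h
          have h1 := (hB1mem F hF).2
          have h2 := (hB1mem F' hF').2
          rw [← insert_erase h1, ← insert_erase h2, hee]
        have hsplit : ℬ₁.card + ℬ₀.card = ℬ.card :=
          card_filter_add_card_filter_not (fun F => x ∈ F)
        have hBxfree : ∀ S ∈ ℬx, x ∉ S := by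
          intro S hS
          obtain ⟨G, _, rfl⟩ := mem_image.1 hS
          exact notMem_erase x G
        have hBxsized : ∀ S ∈ ℬx, S.card = k - 1 := by
          intro S hS
          obtain ⟨G, hG, rfl⟩ := mem_image.1 hS
          rw [card_erase_of_mem (hB1mem G hG).2, hsizedB G (hB1mem G hG).1]
        have hBxne : ℬx.Nonempty := by
          obtain ⟨G, hG, hxG⟩ := hxcov
          exact ⟨G.erase x, mem_image.2 ⟨G, mem_filter.2 ⟨hG, hxG⟩, rfl⟩⟩
        have hB1ne : 0 < ℬ₁.card := by
          obtain ⟨G, hG, hxG⟩ := hxcov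
          exact card_pos.2 ⟨G, mem_filter.2 ⟨hG, hxG⟩⟩
        -- the claim: the link of x is large
        have hclaim : realBinom (t - 1) (k - 1) ≤ (ℬx.card : ℝ) := by
          by_contra hcl
          push_neg at hcl
          have hpas := realBinom_pascal t k hk1
          have hsplit' : (ℬ₁.card : ℝ) + ℬ₀.card = (ℱ.card : ℝ) := by
            rw [← hcardB, ← hsplit]; push_cast; ring
          have h0card : realBinom (t - 1) k < (ℬ₀.card : ℝ) := by
            rw [hcard1] at hcl
            linarith
          have h0pos : 0 < realBinom (t - 1) k := realBinom_pos (by linarith)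
          have h0ne : ℬ₀.Nonempty := by
            rw [← card_pos]
            by_contra h
            push_neg at h
            have : ℬ₀.card = 0 := by omega
            rw [this] at h0card
            push_cast at h0card
            linarith
          have h0sized : ∀ F ∈ ℬ₀, F.card = k := fun F hF => hsizedB F (mem_filter.1 hF).1
          have h0N : k + ℬ₀.card ≤ N := by
            have : ℬ.card = ℱ.card := hcardB
            omega
          have h0sh := ih k hk1 ℬ₀ h0N (t - 1) (by linarith) h0ne h0sized h0card.le
          have hsubx : Finset.shadow ℬ₀ ⊆ ℬx := by
            intro S hS
            rw [mem_shadow_iff] at hS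
            obtain ⟨G, hG, y, hy, rfl⟩ := hS
            obtain ⟨hGB, hxG⟩ := mem_filter.1 hG
            have hmem := hcompr G hGB y hy hxG
            refine mem_image.2 ⟨insert x (G.erase y), mem_filter.2 ⟨hmem, mem_insert_self x _⟩, ?_⟩
            exact erase_insert (fun h => hxG (erase_subset y G h))
          have := card_le_card hsubx
          have : ((Finset.shadow ℬ₀).card : ℝ) ≤ (ℬx.card : ℝ) := by exact_mod_cast this
          linarith
        -- sub-shadows
        have hsub1 : ℬx ⊆ Finset.shadow ℬ := by
          intro S hS
          obtain ⟨G, hG, rfl⟩ := mem_image.1 hS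
          exact erase_mem_shadow (hB1mem G hG).1 (hB1mem G hG).2
        have hshadfree : ∀ T ∈ Finset.shadow ℬx, x ∉ T := by
          intro T hT
          rw [mem_shadow_iff] at hT
          obtain ⟨S, hS, y, hy, rfl⟩ := hT
          exact fun h => hBxfree S hS (erase_subset y S h)
        have hsub2 : (Finset.shadow ℬx).image (insert x) ⊆ Finset.shadow ℬ := by
          intro T' hT'
          obtain ⟨T, hT, rfl⟩ := mem_image.1 hT'
          rw [mem_shadow_iff] at hT
          obtain ⟨S, hS, y, hy, rfl⟩ := hT
          obtain ⟨G, hG, rfl⟩ := mem_image.1 hS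
          obtain ⟨hGB, hxG⟩ := hB1mem G hG
          have hyx : y ≠ x := (mem_erase.1 hy).1
          have hyG : y ∈ G := (mem_erase.1 hy).2
          have : insert x ((G.erase x).erase y) = G.erase y := by
            rw [Finset.erase_right_comm]
            exact insert_erase (mem_erase.2 ⟨fun h => hyx h.symm, hxG⟩)
          rw [this]
          exact erase_mem_shadow hGB hyG
        have hdisj : Disjoint ℬx ((Finset.shadow ℬx).image (insert x)) := by
          rw [disjoint_left]
          intro S hS hS'
          obtain ⟨T, _, rfl⟩ := mem_image.1 hS'
          exact hBxfree _ hS (mem_insert_self x T)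
        have himg : ((Finset.shadow ℬx).image (insert x)).card = (Finset.shadow ℬx).card := by
          apply card_image_of_injOn
          intro T hT T' hT' h
          rw [← erase_insert (hshadfree T hT), ← erase_insert (hshadfree T' hT'), h]
        have hcount : ℬx.card + (Finset.shadow ℬx).card ≤ (Finset.shadow ℬ).card := by
          rw [← hcard1] at hsplit
          calc ℬx.card + (Finset.shadow ℬx).card
              = (ℬx ∪ (Finset.shadow ℬx).image (insert x)).card := by
                rw [card_union_of_disjoint hdisj, himg]
            _ ≤ (Finset.shadow ℬ).card := card_le_card (union_subset hsub1 hsub2)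
        -- bound shadow of link by induction at level k-1
        have hxN : (k - 1) + ℬx.card ≤ N := by
          have h1 : ℬx.card ≤ ℬ.card := hcard1 ▸ card_le_card (filter_subset _ _)
          have h2 : ℬ.card = ℱ.card := hcardB
          omega
        have hihx := ih (k - 1) (by omega) ℬx hxN (t - 1)
          (by rw [hkcast]; linarith) hBxne hBxsized hclaim
        have hpas := realBinom_pascal t (k - 1) (by omega)
        have hfin : ((Finset.shadow ℬ).card : ℝ) ≤ ((Finset.shadow ℱ).card : ℝ) := by
          exact_mod_cast hshadB
        have hcount' : (ℬx.card : ℝ) + ((Finset.shadow ℬx).card : ℝ) ≤ ((Finset.shadow ℬ).card : ℝ) := by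
          exact_mod_cast hcount
        rw [hpas]
        linarith

/-- Kruskal–Katona theorem (Lovász version): if `ℱ` is a family of `k`-sets with
`|ℱ| ≥ C(t,k)` for a real `t ≥ k`, then `|∂ℱ| ≥ C(t,k-1)`. -/
theorem kruskal_katona_lovasz {α : Type*} [DecidableEq α]
    (k : ℕ) (hk : 1 ≤ k) (t : ℝ) (ht : (k : ℝ) ≤ t)
    (ℱ : Finset (Finset α)) (hunif : ∀ F ∈ ℱ, F.card = k)
    (hsize : realBinom t k ≤ (ℱ.card : ℝ)) :
    realBinom t (k - 1) ≤ ((Finset.shadow ℱ).card : ℝ) := by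
  have h1 : (1 : ℝ) ≤ realBinom t k := by
    rw [← realBinom_self k]
    exact realBinom_mono (by linarith) ht
  have hne : ℱ.Nonempty := by
    rw [← card_pos]
    by_contra h
    push_neg at h
    interval_cases h' : ℱ.card
    · simp_all; linarith
  exact lovasz_aux (k + ℱ.card) k hk ℱ le_rfl t (by linarith) hne hunif hsize
end

section
/- For every real d with 1/4 ≤ d < (47 − 5√57)/24 there exists n₀ such that for all n ≥ n₀ the following holds: if ℱ is a family of 3-element subsets of an n-element vertex set X with δ(ℱ) ≥ d·C(n,2), then |∂ℱ| ≥ (4√d − 2d − 1)·C(n,2). -/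
/-!
Let `T` be the set of pairs covered by no member of `ℱ`, so that `|∂ℱ| = C(n, 2) - |T|`, and let `x`
be a vertex of maximal `T`-degree `Δ`, with `T`-neighbourhood `N`. The link of `x` consists of
pairs avoiding `{x} ∪ N` and lying in `∂ℱ`, so it is disjoint from the `t` pairs of `T` inside the
complement of `{x} ∪ N`: `d·C(n, 2) + t ≤ C(n - 1 - Δ, 2)`. The pairs of `T` meeting `{x} ∪ N` are
at most `Δ + Δ(Δ - 1) = Δ²`, and `2|T| ≤ nΔ`. For `√d ≤ (15 - √57) / 12` these bounds force
`|T| ≤ 2(1 - √d)²·C(n, 2)`.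
-/

open Finset
open scoped FinsetFamily

namespace Finset

variable {V : Type*} [DecidableEq V]

lemma exists_eq_pair_of_card_eq_two {e : Finset V} (he : #e = 2) {x : V} (hx : x ∈ e) :
    ∃ y, y ≠ x ∧ e = {x, y} := by
  obtain ⟨a, b, hab, rfl⟩ := card_eq_two.1 he
  rcases mem_insert.1 hx with rfl | hx
  · exact ⟨b, hab.symm, rfl⟩
  · rw [mem_singleton.1 hx]
    exact ⟨a, hab, pair_comm _ _⟩

section PairFamily

variable [Fintype V] {T : Finset (Finset V)}

lemma card_filter_mem_eq_card_filter_pair_mem (hT : (T : Set (Finset V)).Sized 2) (x : V) :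
    #{e ∈ T | x ∈ e} = #({y | {x, y} ∈ T} : Finset V) := by
  have hne : ∀ y, {x, y} ∈ T → y ≠ x := by
    rintro y hy rfl
    simpa using hT hy
  refine (card_nbij (fun y => {x, y}) (fun y hy => ?_) (fun y hy y' hy' h => ?_)
    (fun e he => ?_)).symm
  · simp_all
  · have : y ∈ ({x, y'} : Finset V) := by simp [← show ({x, y} : Finset V) = {x, y'} from h]
    simp only [mem_insert, mem_singleton] at this
    exact this.resolve_left (hne y (by simpa using hy))
  · obtain ⟨heT, hxe⟩ := mem_filter.1 he
    obtain ⟨y, -, rfl⟩ := exists_eq_pair_of_card_eq_two (hT heT) hxe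
    exact ⟨y, by simpa using heT, rfl⟩

lemma card_filter_mem_lt_card (hT : (T : Set (Finset V)).Sized 2) (x : V) :
    #{e ∈ T | x ∈ e} < Fintype.card V := by
  rw [card_filter_mem_eq_card_filter_pair_mem hT x]
  exact card_lt_univ_of_notMem (x := x) fun hx => by simpa using hT (mem_filter.1 hx).2

lemma two_mul_card_le_card_mul (hT : (T : Set (Finset V)).Sized 2) {k : ℕ}
    (hk : ∀ y, #{e ∈ T | y ∈ e} ≤ k) : 2 * #T ≤ Fintype.card V * k := by
  calc 2 * #T = ∑ e ∈ T, #e := by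
        rw [sum_congr rfl fun e he => hT he, sum_const, smul_eq_mul, mul_comm]
    _ ≤ Fintype.card V * k := sum_card_le hk

lemma card_le_card_filter_subset_compl_add_sq (hT : (T : Set (Finset V)).Sized 2) {x : V}
    (hmax : ∀ y, #{e ∈ T | y ∈ e} ≤ #{e ∈ T | x ∈ e}) :
    #T ≤ #{e ∈ T | e ⊆ (insert x ({y | {x, y} ∈ T} : Finset V))ᶜ} + #{e ∈ T | x ∈ e} ^ 2 := by
  set N : Finset V := {y | {x, y} ∈ T}
  set Δ := #{e ∈ T | x ∈ e}
  rw [← card_filter_add_card_filter_not (s := T) (fun e => e ⊆ (insert x N)ᶜ)]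
  gcongr
  have hcover : {e ∈ T | ¬ e ⊆ (insert x N)ᶜ} ⊆
      {e ∈ T | x ∈ e} ∪ N.biUnion fun y => {e ∈ T | y ∈ e}.erase {x, y} := by
    intro e he
    obtain ⟨heT, hout⟩ := mem_filter.1 he
    obtain ⟨z, hze, hz⟩ := not_subset.1 hout
    rw [mem_compl, not_not, mem_insert] at hz
    by_cases hxe : x ∈ e
    · exact mem_union_left _ (mem_filter.2 ⟨heT, hxe⟩)
    · refine mem_union_right _ (mem_biUnion.2 ⟨z, hz.resolve_left ?_, ?_⟩)
      · rintro rfl; exact hxe hze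
      · exact mem_erase.2 ⟨by rintro rfl; simp at hxe, mem_filter.2 ⟨heT, hze⟩⟩
  calc #{e ∈ T | ¬ e ⊆ (insert x N)ᶜ}
      ≤ #({e ∈ T | x ∈ e} ∪ N.biUnion fun y => {e ∈ T | y ∈ e}.erase {x, y}) :=
        card_le_card hcover
    _ ≤ Δ + ∑ y ∈ N, #({e ∈ T | y ∈ e}.erase {x, y}) :=
        (card_union_le _ _).trans (Nat.add_le_add_left card_biUnion_le _)
    _ ≤ Δ + ∑ _y ∈ N, (Δ - 1) := by
        gcongr with y hy
        rw [card_erase_of_mem (mem_filter.2 ⟨(mem_filter.1 hy).2, by simp⟩)]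
        exact Nat.sub_le_sub_right (hmax y) 1
    _ = Δ ^ 2 := by
        have hN : #N = Δ := (card_filter_mem_eq_card_filter_pair_mem hT x).symm
        rw [sum_const, smul_eq_mul, hN]
        clear_value Δ
        rcases Δ with _ | k
        · rfl
        · rw [Nat.add_sub_cancel]; ring

end PairFamily

lemma card_memberSubfamily (a : V) (𝒜 : Finset (Finset V)) :
    #(𝒜.memberSubfamily a) = #{s ∈ 𝒜 | a ∈ s} :=
  card_image_of_injOn ((erase_injOn' a).mono fun _ hs => (mem_filter.1 hs).2)

lemma memberSubfamily_subset_shadow (a : V) (𝒜 : Finset (Finset V)) :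
    𝒜.memberSubfamily a ⊆ ∂ 𝒜 := by
  intro s hs
  rw [mem_memberSubfamily] at hs
  simpa [erase_insert hs.2] using erase_mem_shadow hs.1 (mem_insert_self a s)

lemma pair_mem_shadow {ℱ : Finset (Finset V)} (hℱ : (ℱ : Set (Finset V)).Sized 3)
    {F : Finset V} (hF : F ∈ ℱ) {x y : V} (hx : x ∈ F) (hy : y ∈ F) (hxy : x ≠ y) : {x, y} ∈ ∂ ℱ :=
  mem_shadow_iff_exists_mem_card_add_one.2
    ⟨F, hF, insert_subset hx (singleton_subset_iff.2 hy), by rw [hℱ hF, card_pair hxy]⟩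

section Shadow

variable [Fintype V] {ℱ : Finset (Finset V)}

def uncoveredPairs (ℱ : Finset (Finset V)) : Finset (Finset V) := powersetCard 2 univ \ ∂ ℱ

lemma sized_uncoveredPairs (ℱ : Finset (Finset V)) :
    (uncoveredPairs ℱ : Set (Finset V)).Sized 2 :=
  fun _ he => (mem_powersetCard.1 (mem_sdiff.1 he).1).2

lemma card_shadow_add_card_uncoveredPairs (hℱ : (ℱ : Set (Finset V)).Sized 3) :
    #(∂ ℱ) + #(uncoveredPairs ℱ) = (Fintype.card V).choose 2 := by
  rw [add_comm, uncoveredPairs,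
    card_sdiff_add_card_eq_card hℱ.shadow.subset_powersetCard_univ, card_powersetCard, card_univ]

lemma memberSubfamily_subset_powersetCard_compl (hℱ : (ℱ : Set (Finset V)).Sized 3) (x : V) :
    ℱ.memberSubfamily x ⊆
      powersetCard 2 (insert x ({y | {x, y} ∈ uncoveredPairs ℱ} : Finset V))ᶜ := by
  intro G hG
  obtain ⟨hxG, hx⟩ := mem_memberSubfamily.1 hG
  refine mem_powersetCard.2 ⟨fun z hz => ?_, ?_⟩
  · have hzx : z ≠ x := by rintro rfl; exact hx hz
    have hshadow := pair_mem_shadow hℱ hxG (mem_insert_self x G) (mem_insert_of_mem hz) hzx.symm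
    simp [hzx, uncoveredPairs, hshadow]
  · have := hℱ hxG
    rw [card_insert_of_notMem hx] at this
    omega

lemma exists_card_uncoveredPairs_le (hℱ : (ℱ : Set (Finset V)).Sized 3) {x : V}
    (hmax : ∀ y, #{e ∈ uncoveredPairs ℱ | y ∈ e} ≤ #{e ∈ uncoveredPairs ℱ | x ∈ e}) :
    ∃ t, #{F ∈ ℱ | x ∈ F} + t ≤
        (Fintype.card V - 1 - #{e ∈ uncoveredPairs ℱ | x ∈ e}).choose 2 ∧
      #(uncoveredPairs ℱ) ≤ t + #{e ∈ uncoveredPairs ℱ | x ∈ e} ^ 2 := by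
  have hT := sized_uncoveredPairs ℱ
  have hcut := card_le_card_filter_subset_compl_add_sq hT hmax
  have hN := card_filter_mem_eq_card_filter_pair_mem hT x
  set T := uncoveredPairs ℱ
  set N : Finset V := {y | {x, y} ∈ T}
  set Δ := #{e ∈ T | x ∈ e}
  have hxN : x ∉ N := by simpa [N] using fun h => by simpa using hT h
  have hS : #(insert x N)ᶜ = Fintype.card V - 1 - Δ := by
    rw [card_compl, card_insert_of_notMem hxN, hN]
    omega
  have hdisj : Disjoint (ℱ.memberSubfamily x) {e ∈ T | e ⊆ (insert x N)ᶜ} :=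
    disjoint_left.2 fun G hG hGT =>
      (mem_sdiff.1 (mem_filter.1 hGT).1).2 (memberSubfamily_subset_shadow x ℱ hG)
  have hlink :
      #{F ∈ ℱ | x ∈ F} + #{e ∈ T | e ⊆ (insert x N)ᶜ} ≤ (#(insert x N)ᶜ).choose 2 := by
    rw [← card_memberSubfamily, ← card_union_of_disjoint hdisj, ← card_powersetCard]
    refine card_le_card (union_subset (memberSubfamily_subset_powersetCard_compl hℱ x) ?_)
    exact fun e he => mem_powersetCard.2 ⟨(mem_filter.1 he).2, hT (mem_filter.1 he).1⟩
  exact ⟨_, hS ▸ hlink, hcut⟩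

end Shadow

end Finset

lemma quadratic_nonpos_of_endpoints {α β γ u v x : ℝ} (hα : 0 ≤ α) (hux : u ≤ x) (hxv : x ≤ v)
    (hu : α * u ^ 2 + β * u + γ ≤ 0) (hv : α * v ^ 2 + β * v + γ ≤ 0) :
    α * x ^ 2 + β * x + γ ≤ 0 := by
  have hconv : (v - u) * (α * x ^ 2 + β * x + γ) = (v - x) * (α * u ^ 2 + β * u + γ)
      + (x - u) * (α * v ^ 2 + β * v + γ) - α * (x - u) * (v - x) * (v - u) := by ring
  rcases hux.eq_or_lt with rfl | hlt
  · exact hu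
  · have : 0 ≤ α * (x - u) * (v - x) := by
      have := sub_nonneg.2 hux; have := sub_nonneg.2 hxv; positivity
    nlinarith [mul_nonpos_of_nonneg_of_nonpos (sub_nonneg.2 hxv) hu,
      mul_nonpos_of_nonneg_of_nonpos (sub_nonneg.2 hux) hv]

/-- If `D ≤ 2w²(N - 1)`, `hhand` suffices. Otherwise `a = N - 1 - D` lies between `(1 - w)(N - 1)`
(by `hlink`) and `(1 - 2w²)(N - 1)`, and `m - 2w²·C(N, 2)` is bounded by a convex quadratic in `a`
that is nonpositive at both ends; at the upper end its `N²`-coefficient is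
`w (2w - 1)(6w² + 3w - 2) / 2`. -/
lemma le_two_mul_sq_mul_of_link_bound {w N D t m : ℝ} (hw0 : 0 ≤ w) (hw : w ≤ 1 / 2)
    (hwq : 0 ≤ 6 * w ^ 2 + 3 * w - 2) (hD0 : 0 ≤ D) (hDN : D ≤ N - 1) (ht : 0 ≤ t)
    (hlink : (1 - w) ^ 2 * (N * (N - 1) / 2) + t ≤ (N - 1 - D) * (N - 1 - D - 1) / 2)
    (hm : m ≤ t + D ^ 2) (hhand : 2 * m ≤ N * D) :
    m ≤ 2 * w ^ 2 * (N * (N - 1) / 2) := by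
  obtain ⟨M, rfl⟩ : ∃ M, N = M + 1 := ⟨N - 1, by ring⟩
  obtain ⟨a, rfl⟩ : ∃ a, D = M - a := ⟨M - D, by ring⟩
  by_cases hsmall : M - a ≤ 2 * w ^ 2 * M
  · nlinarith
  have hM : 0 ≤ M := by linarith
  have hlow : (1 - w) * M ≤ a := by
    by_contra! hlt
    have : 0 ≤ (1 - w) * M := mul_nonneg (by linarith) hM
    nlinarith [mul_self_lt_mul_self (by linarith : 0 ≤ a) hlt]
  have key := quadratic_nonpos_of_endpoints (α := 3 / 2)
    (β := -(2 * M + 1 / 2))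
    (γ := M ^ 2 - (1 - w) ^ 2 * (M * (M + 1)) / 2 - w ^ 2 * (M * (M + 1)))
    (by norm_num) hlow (by linarith : a ≤ (1 - 2 * w ^ 2) * M) ?_ ?_
  · nlinarith
  · nlinarith
  · have : 0 ≤ w * (1 - 2 * w) * (6 * w ^ 2 + 3 * w - 2) :=
      mul_nonneg (mul_nonneg hw0 (by linarith)) hwq
    nlinarith

lemma one_sub_sqrt_bounds {d : ℝ} (hd1 : 1 / 4 ≤ d) (hd2 : d ≤ (47 - 5 * Real.sqrt 57) / 24) :
    0 ≤ 1 - Real.sqrt d ∧ 1 - Real.sqrt d ≤ 1 / 2 ∧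
      0 ≤ 6 * (1 - Real.sqrt d) ^ 2 + 3 * (1 - Real.sqrt d) - 2 := by
  have h57 : Real.sqrt 57 ^ 2 = 57 := Real.sq_sqrt (by norm_num)
  have h57lo : 7 < Real.sqrt 57 := by nlinarith [Real.sqrt_nonneg 57]
  have h57hi : Real.sqrt 57 < 8 := by nlinarith [Real.sqrt_nonneg 57]
  have hlo : 1 / 2 ≤ Real.sqrt d := Real.le_sqrt_of_sq_le (by linarith)
  have hhi : Real.sqrt d ≤ (15 - Real.sqrt 57) / 12 :=
    Real.sqrt_le_iff.2 ⟨by linarith, by nlinarith⟩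
  refine ⟨by linarith, by linarith, ?_⟩
  nlinarith [mul_nonneg (sub_nonneg.2 hhi)
    (by linarith : (0 : ℝ) ≤ (15 + Real.sqrt 57) / 12 - Real.sqrt d)]

/-- Minimum-degree Kruskal–Katona for triple systems, first range of `d`:
for `1/4 ≤ d < (47 - 5√57)/24` and large `n`, a triple system on `n` vertices with
minimum degree at least `d·C(n,2)` has shadow of size at least `(4√d - 2d - 1)·C(n,2)`. -/
theorem shadow_min_degree_small_d (d : ℝ) (hd1 : 1 / 4 ≤ d)
    (hd2 : d < (47 - 5 * Real.sqrt 57) / 24) :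
    ∃ n₀ : ℕ, ∀ n : ℕ, n₀ ≤ n →
      ∀ (V : Type) [Fintype V] [DecidableEq V], Fintype.card V = n →
      ∀ ℱ : Finset (Finset V), (∀ F ∈ ℱ, F.card = 3) →
      (∀ x : V, d * ((n : ℝ) * ((n : ℝ) - 1) / 2)
          ≤ (((ℱ.filter (fun F => x ∈ F)).card : ℝ))) →
      (4 * Real.sqrt d - 2 * d - 1) * ((n : ℝ) * ((n : ℝ) - 1) / 2)
        ≤ ((Finset.shadow ℱ).card : ℝ) := by
  obtain ⟨hw0, hw, hwq⟩ := one_sub_sqrt_bounds hd1 hd2.le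
  refine ⟨1, fun n hn V _ _ hcard ℱ hℱ hdeg => ?_⟩
  have : Nonempty V := Fintype.card_pos_iff.1 (by omega)
  have hsized : (ℱ : Set (Finset V)).Sized 3 := fun F hF => hℱ F hF
  obtain ⟨x, hmax⟩ := Finite.exists_max fun y => #{e ∈ uncoveredPairs ℱ | y ∈ e}
  obtain ⟨t, hlink, hm⟩ := exists_card_uncoveredPairs_le hsized hmax
  have hΔ := card_filter_mem_lt_card (sized_uncoveredPairs ℱ) x
  have hhand := two_mul_card_le_card_mul (sized_uncoveredPairs ℱ) hmax
  have htot := card_shadow_add_card_uncoveredPairs hsized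
  rw [hcard] at hlink hΔ hhand htot
  have hsq : Real.sqrt d ^ 2 = d := Real.sq_sqrt (by linarith)
  set Δ := #{e ∈ uncoveredPairs ℱ | x ∈ e}
  have hchoose : (((n - 1 - Δ).choose 2 : ℕ) : ℝ) = (n - 1 - Δ) * (n - 1 - Δ - 1) / 2 := by
    rw [Nat.cast_choose_two, Nat.cast_sub (by omega), Nat.cast_sub (by omega), Nat.cast_one]
  have hlinkR : (#{F ∈ ℱ | x ∈ F} : ℝ) + t ≤ (n - 1 - Δ) * (n - 1 - Δ - 1) / 2 := by
    rw [← hchoose]; exact_mod_cast hlink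
  have hmissing := le_two_mul_sq_mul_of_link_bound (N := n) (D := Δ) (t := t)
    (m := #(uncoveredPairs ℱ)) hw0 hw hwq (Nat.cast_nonneg _)
    (by rw [le_sub_iff_add_le]; exact_mod_cast hΔ) (Nat.cast_nonneg _)
    (by rw [sub_sub_cancel, hsq]; linarith [hdeg x]) (by exact_mod_cast hm)
    (by exact_mod_cast hhand)
  have hshadow : ((#(∂ ℱ) : ℕ) : ℝ) + #(uncoveredPairs ℱ) = n * (n - 1) / 2 := by
    rw [← Nat.cast_choose_two, ← htot, Nat.cast_add]
  nlinarith
end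

section
/- For every real d with (47 − 5√57)/24 ≤ d < 1 there exists n₀ such that for all n ≥ n₀ the following holds: if ℱ is a family of 3-element subsets of an n-element vertex set X with δ(ℱ) ≥ d·C(n,2), then |∂ℱ| ≥ (1/2 + √((4d − 1)/12))·C(n,2). -/
/-!
Let `G = ∂ℱ`, viewed as a graph, and let `v` be a vertex of minimum degree in `G`, with
neighbourhood `N` of size `δ`. Removing `v` from a triple through `v` leaves an edge of `G` inside
`N`, so `d·C(n,2) ≤ e(G[N]) ≤ C(δ,2)`. Counting the edges at `v`, inside `N`, and leaving
`{v} ∪ N` (each of the `n - 1 - δ` remaining vertices has degree at least `δ`) bounds `|G|` below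
by a concave quadratic `q(δ)`, while the handshake lemma gives `|G| ≥ nδ/2`. With
`e = √((4d - 1)/12)`, the handshake bound suffices when `δ ≥ (1/2 + e)(n - 1)`. Otherwise `δ` lies
between the positive root of `δ(δ - 1) = d·n(n - 1)` and `(1/2 + e)(n - 1)`, and `q` reaches the
target at both ends. At the lower end this amounts, for large `n`, to `d + 3/4 + e/2 ≤ 2√d`, which
holds exactly when `d ≥ (47 - 5√57)/24`.
-/

open Finset
open scoped FinsetFamily

section Neighbors

variable {V : Type*} [DecidableEq V] {𝒮 : Finset (Finset V)} {v u : V} {S : Finset V}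

def neighbors (𝒮 : Finset (Finset V)) (v : V) : Finset V :=
  {S ∈ 𝒮 | v ∈ S}.biUnion (·.erase v)

lemma mem_neighbors : u ∈ neighbors 𝒮 v ↔ ∃ S ∈ 𝒮, v ∈ S ∧ u ≠ v ∧ u ∈ S := by
  simp only [neighbors, mem_biUnion, mem_filter, mem_erase, and_assoc]

lemma self_notMem_neighbors : v ∉ neighbors 𝒮 v := by
  simp [mem_neighbors]

lemma subset_insert_neighbors (hS : S ∈ 𝒮) (hv : v ∈ S) : S ⊆ insert v (neighbors 𝒮 v) := by
  intro u hu
  rw [mem_insert, mem_neighbors]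
  by_cases huv : u = v
  · exact .inl huv
  · exact .inr ⟨S, hS, hv, huv, hu⟩

lemma card_neighbors_le (h2 : ∀ S ∈ 𝒮, #S = 2) (v : V) :
    #(neighbors 𝒮 v) ≤ #{S ∈ 𝒮 | v ∈ S} :=
  card_biUnion_le.trans_eq <| by
    rw [card_eq_sum_ones]
    refine sum_congr rfl fun S hS => ?_
    obtain ⟨hS, hv⟩ := mem_filter.1 hS
    rw [card_erase_of_mem hv, h2 S hS]

lemma card_filter_mem_add_card_filter_subset_neighbors_le (v : V) :
    #{S ∈ 𝒮 | v ∈ S} + #{S ∈ 𝒮 | S ⊆ neighbors 𝒮 v}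
      ≤ #{S ∈ 𝒮 | S ⊆ insert v (neighbors 𝒮 v)} := by
  rw [← card_union_of_disjoint]
  · refine card_le_card (union_subset ?_ ?_) <;> intro S hS <;>
      obtain ⟨hS, hS'⟩ := mem_filter.1 hS <;> refine mem_filter.2 ⟨hS, ?_⟩
    · exact subset_insert_neighbors hS hS'
    · exact hS'.trans (subset_insert _ _)
  · exact disjoint_filter.2 fun S _ hv hN => self_notMem_neighbors (hN hv)

lemma card_filter_mem_le_card_filter_subset_neighbors_shadow {ℱ : Finset (Finset V)}
    (h3 : ∀ F ∈ ℱ, 3 ≤ #F) (v : V) :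
    #{F ∈ ℱ | v ∈ F} ≤ #{S ∈ ∂ ℱ | S ⊆ neighbors (∂ ℱ) v} := by
  refine card_le_card_of_injOn (·.erase v) (fun F hF => ?_)
    ((erase_injOn' v).mono fun F hF => (mem_filter.1 hF).2)
  obtain ⟨hF, hvF⟩ := mem_filter.1 hF
  refine mem_filter.2 ⟨erase_mem_shadow hF hvF, fun u hu => ?_⟩
  obtain ⟨huv, huF⟩ := mem_erase.1 hu
  -- a third vertex `w` of `F` leaves the edge `F \ {w} ∋ u, v` in the shadow
  obtain ⟨w, hw⟩ : ((F.erase v).erase u).Nonempty := by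
    rw [← card_pos, card_erase_of_mem hu, card_erase_of_mem hvF]
    have := h3 F hF
    omega
  obtain ⟨hwu, hw⟩ := mem_erase.1 hw
  obtain ⟨hwv, hwF⟩ := mem_erase.1 hw
  exact mem_neighbors.2 ⟨F.erase w, erase_mem_shadow hF hwF, mem_erase.2 ⟨hwv.symm, hvF⟩,
    huv, mem_erase.2 ⟨hwu.symm, huF⟩⟩

end Neighbors

section Counting

variable {V : Type*} [DecidableEq V] {𝒮 : Finset (Finset V)} {k : ℕ}

lemma card_filter_subset_le_choose (hk : ∀ S ∈ 𝒮, #S = k) (C : Finset V) :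
    #{S ∈ 𝒮 | S ⊆ C} ≤ (#C).choose k := by
  rw [← card_powersetCard]
  exact card_le_card fun S hS =>
    mem_powersetCard.2 ⟨(mem_filter.1 hS).2, hk S (mem_filter.1 hS).1⟩

variable [Fintype V]

lemma sum_card_compl_inter_le (h2 : ∀ S ∈ 𝒮, #S = 2) (A : Finset V) :
    ∑ S ∈ 𝒮, #(Aᶜ ∩ S) ≤ #{S ∈ 𝒮 | ¬S ⊆ A} + (#Aᶜ).choose 2 := by
  refine le_trans ?_ (Nat.add_le_add_left (card_filter_subset_le_choose h2 Aᶜ) _)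
  rw [card_filter, card_filter, ← sum_add_distrib]
  refine sum_le_sum fun S hS => ?_
  by_cases hA : S ⊆ A
  · simp [disjoint_iff_inter_eq_empty.1 (disjoint_compl_left.mono_right hA)]
  by_cases hC : S ⊆ Aᶜ
  · simp only [hA, hC, inter_eq_right.2 hC, h2 S hS]
    rfl
  · have : #(Aᶜ ∩ S) < #S :=
      card_lt_card ⟨inter_subset_right, fun h => hC (h.trans inter_subset_left)⟩
    simp only [hA, hC, h2 S hS, not_false_eq_true, if_true, if_false] at this ⊢
    omega

end Counting

section MinDegree

variable {V : Type*} [DecidableEq V] [Fintype V] {𝒮 : Finset (Finset V)} {v : V}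

lemma card_mul_card_neighbors_le (h2 : ∀ S ∈ 𝒮, #S = 2)
    (hv : ∀ x, #{S ∈ 𝒮 | v ∈ S} ≤ #{S ∈ 𝒮 | x ∈ S}) :
    Fintype.card V * #(neighbors 𝒮 v) ≤ 2 * #𝒮 :=
  calc Fintype.card V * #(neighbors 𝒮 v) ≤ ∑ S ∈ 𝒮, #S :=
        le_sum_card fun x => (card_neighbors_le h2 v).trans (hv x)
    _ = 2 * #𝒮 := by rw [sum_congr rfl h2, sum_const, smul_eq_mul, mul_comm]

lemma card_neighbors_add_card_filter_subset_add_mul_le (h2 : ∀ S ∈ 𝒮, #S = 2)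
    (hv : ∀ x, #{S ∈ 𝒮 | v ∈ S} ≤ #{S ∈ 𝒮 | x ∈ S}) :
    #(neighbors 𝒮 v) + #{S ∈ 𝒮 | S ⊆ neighbors 𝒮 v}
        + #(insert v (neighbors 𝒮 v))ᶜ * #(neighbors 𝒮 v)
      ≤ #𝒮 + (#(insert v (neighbors 𝒮 v))ᶜ).choose 2 := by
  have hδ := card_neighbors_le h2 v
  have hinside := card_filter_mem_add_card_filter_subset_neighbors_le (𝒮 := 𝒮) v
  have hcrossing := le_sum_card_inter (s := (insert v (neighbors 𝒮 v))ᶜ) (B := 𝒮)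
    fun x _ => hδ.trans (hv x)
  have hsplit := card_filter_add_card_filter_not (s := 𝒮) (· ⊆ insert v (neighbors 𝒮 v))
  have := sum_card_compl_inter_le h2 (insert v (neighbors 𝒮 v))
  omega

end MinDegree

lemma exists_card_shadow_bounds {V : Type*} [DecidableEq V] [Fintype V] [Nonempty V]
    {ℱ : Finset (Finset V)} (h3 : ∀ F ∈ ℱ, #F = 3) :
    ∃ v : V, ∃ δ b : ℕ, b + δ + 1 = Fintype.card V ∧ #{F ∈ ℱ | v ∈ F} ≤ δ.choose 2 ∧
      δ + #{F ∈ ℱ | v ∈ F} + b * δ ≤ #(∂ ℱ) + b.choose 2 ∧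
      Fintype.card V * δ ≤ 2 * #(∂ ℱ) := by
  have h2 : ∀ S ∈ ∂ ℱ, #S = 2 := fun S hS => by
    obtain ⟨F, hF, a, ha, rfl⟩ := mem_shadow_iff.1 hS
    rw [card_erase_of_mem ha, h3 F hF]
  obtain ⟨v, hv⟩ := Finite.exists_min fun x => #{S ∈ ∂ ℱ | x ∈ S}
  have hlink := card_filter_mem_le_card_filter_subset_neighbors_shadow
    (fun F hF => (h3 F hF).ge) v
  have hN := card_filter_subset_le_choose h2 (neighbors (∂ ℱ) v)
  have hcount := card_neighbors_add_card_filter_subset_add_mul_le h2 hv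
  refine ⟨v, #(neighbors (∂ ℱ) v), #(insert v (neighbors (∂ ℱ) v))ᶜ, ?_, hlink.trans hN,
    by omega, card_mul_card_neighbors_le h2 hv⟩
  rw [card_compl, card_insert_of_notMem self_notMem_neighbors]
  have := card_le_univ (insert v (neighbors (∂ ℱ) v))
  rw [card_insert_of_notMem self_notMem_neighbors] at this
  omega

lemma le_of_threshold_le {u e : ℝ} (hu : (15 - √57) / 12 ≤ u) (hu1 : u ≤ 1)
    (he : 12 * e ^ 2 = 4 * u ^ 2 - 1) : e ≤ 4 * u - 2 * u ^ 2 - 3 / 2 := by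
  have h57 : √57 ^ 2 = 57 := Real.sq_sqrt (by norm_num)
  have h57_le : √57 ≤ 8 := by nlinarith [Real.sqrt_nonneg 57]
  have hu_half : 1 / 2 ≤ u := by nlinarith
  -- `(15 - √57) / 12` is the smaller root of `6u² - 15u + 7`, and
  -- `12 (4u - 2u² - 3/2)² - (4u² - 1) = 4 (2u - 1) (u - 1) (6u² - 15u + 7)`
  have hroot : 6 * u ^ 2 - 15 * u + 7 ≤ 0 := by
    nlinarith [mul_nonneg (sub_nonneg.2 hu) (by nlinarith : (0:ℝ) ≤ (15 + √57) / 12 - u)]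
  have hR : 0 ≤ 4 * u - 2 * u ^ 2 - 3 / 2 := by nlinarith
  by_contra! h
  nlinarith [pow_lt_pow_left₀ h hR two_ne_zero,
    mul_nonneg (mul_nonneg (sub_nonneg.2 hu1) (by linarith : (0:ℝ) ≤ 2 * u - 1))
      (neg_nonneg.2 hroot)]

lemma one_add_sqrt_div_two_le {D δ : ℝ} (hD : 0 < D) (hδ : 0 ≤ δ) (h : D ≤ δ * (δ - 1)) :
    (1 + √(1 + 4 * D)) / 2 ≤ δ := by
  have : √(1 + 4 * D) ≤ 2 * δ - 1 := by
    rw [Real.sqrt_le_iff]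
    constructor <;> nlinarith
  linarith

lemma le_mul_sqrt_of_three_le {u n : ℝ} (hu : 1 / 2 ≤ u) (hu1 : u < 1) (hn : 3 ≤ (1 - u) * n) :
    4 * u * n ^ 2 - 4 * u * n - 4 * n + 5 ≤ (2 * n - 3) * √(1 + 4 * (u ^ 2 * (n * (n - 1)))) := by
  have hn3 : 3 ≤ n := by nlinarith
  rw [← Real.sqrt_sq (by linarith : (0:ℝ) ≤ 2 * n - 3), ← Real.sqrt_mul (by positivity)]
  refine Real.le_sqrt_of_sq_le ?_
  have h1 : (3:ℝ) * (1 / 2) ≤ (1 - u) * n * u := mul_le_mul hn hu (by norm_num) (by nlinarith)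
  nlinarith [mul_le_mul_of_nonneg_right h1 (sq_nonneg n), sq_nonneg (17 * u - 9),
    mul_nonneg (mul_nonneg (by linarith : (0:ℝ) ≤ u) (by linarith : (0:ℝ) ≤ 1 - u))
      (by linarith : (0:ℝ) ≤ n)]

lemma le_of_le_concave_quadratic {a β γ M c b x : ℝ} (ha : 0 ≤ a) (hcx : c ≤ x) (hxb : x ≤ b)
    (hc : M ≤ -a * c ^ 2 + β * c + γ) (hb : M ≤ -a * b ^ 2 + β * b + γ) :
    M ≤ -a * x ^ 2 + β * x + γ := by
  rcases hcx.eq_or_lt with rfl | hcx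
  · exact hc
  -- `(b - c) (q x - M) = (b - x) (q c - M) + (x - c) (q b - M) + a (x - c) (b - x) (b - c)`
  have key : 0 ≤ (b - c) * (-a * x ^ 2 + β * x + γ - M) := by
    nlinarith [mul_nonneg (sub_nonneg.2 hxb) (sub_nonneg.2 hc),
      mul_nonneg (sub_nonneg.2 hcx.le) (sub_nonneg.2 hb),
      mul_nonneg (mul_nonneg (mul_nonneg ha (sub_nonneg.2 hcx.le)) (sub_nonneg.2 hxb))
        (by linarith : (0:ℝ) ≤ b - c)]
  linarith [(mul_nonneg_iff_of_pos_left (by linarith : (0:ℝ) < b - c)).1 key]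

lemma half_add_mul_le_of_counts {u e n δ b x m : ℝ} (hu1 : u < 1)
    (he : 12 * e ^ 2 = 4 * u ^ 2 - 1) (hkey : e ≤ 4 * u - 2 * u ^ 2 - 3 / 2)
    (hn : 3 ≤ (1 - u) * n) (hδ : 0 ≤ δ) (hb : b + δ + 1 = n)
    (hx : u ^ 2 * (n * (n - 1) / 2) ≤ x) (hxδ : x ≤ δ * (δ - 1) / 2)
    (hcount : δ + x + b * δ ≤ m + b * (b - 1) / 2) (hhs : n * δ ≤ 2 * m) :
    (1 / 2 + e) * (n * (n - 1) / 2) ≤ m := by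
  have hu : 1 / 2 ≤ u := by nlinarith
  have hn3 : 3 ≤ n := by nlinarith
  obtain rfl : b = n - 1 - δ := by linarith
  set D := u ^ 2 * (n * (n - 1)) with hD
  have hD0 : 0 < D := mul_pos (by positivity) (mul_pos (by linarith) (by linarith))
  let q (y : ℝ) := -(3 / 2) * y ^ 2 + (2 * n - 3 / 2) * y + (D / 2 - (n - 1) * (n - 2) / 2)
  have hqδ : q δ ≤ m := by simp only [q]; linarith
  rcases le_or_gt ((1 / 2 + e) * (n - 1)) δ with hδe | hδe
  · nlinarith
  set r := √(1 + 4 * D)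
  have hr : r ^ 2 = 1 + 4 * D := Real.sq_sqrt (by positivity)
  have hlower : (1 / 2 + e) * (n * (n - 1) / 2) ≤ q ((1 + r) / 2) := by
    have hP := le_mul_sqrt_of_three_le hu hu1 hn
    have hK : 2 * (n - 1) * (n * (u ^ 2 + 3 / 4 + e / 2) - 1) - (2 * n - 3)
        ≤ 4 * u * n ^ 2 - 4 * u * n - 4 * n + 5 := by
      nlinarith [mul_nonneg (mul_nonneg (by linarith : (0:ℝ) ≤ n) (by linarith : (0:ℝ) ≤ n - 1))
        (by linarith : (0:ℝ) ≤ 4 * u - 2 * u ^ 2 - 3 / 2 - e)]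
    have : q ((1 + r) / 2) - (1 / 2 + e) * (n * (n - 1) / 2)
        = ((2 * n - 3) * r
            - (2 * (n - 1) * (n * (u ^ 2 + 3 / 4 + e / 2) - 1) - (2 * n - 3))) / 2 := by
      simp only [q, hD]
      linear_combination (-3 / 8) * hr
    linarith
  have hupper : (1 / 2 + e) * (n * (n - 1) / 2) ≤ q ((1 / 2 + e) * (n - 1)) := by
    have : q ((1 / 2 + e) * (n - 1)) - (1 / 2 + e) * (n * (n - 1) / 2)
        = (n - 1) * (3 * e ^ 2 + 5 / 4) / 2 := by
      simp only [q, hD]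
      linear_combination (-(n * (n - 1) / 8)) * he
    nlinarith [mul_nonneg (by linarith : (0:ℝ) ≤ n - 1) (sq_nonneg e)]
  exact (le_of_le_concave_quadratic (by norm_num)
    (one_add_sqrt_div_two_le hD0 hδ (by linarith)) hδe.le hlower hupper).trans hqδ

/-- Minimum-degree Kruskal–Katona for triple systems, second range of `d`:
for `(47 - 5√57)/24 ≤ d < 1` and large `n`, a triple system on `n` vertices with
minimum degree at least `d·C(n,2)` has shadow of size at least
`(1/2 + √((4d-1)/12))·C(n,2)`. -/
theorem shadow_min_degree_large_d (d : ℝ)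
    (hd1 : (47 - 5 * Real.sqrt 57) / 24 ≤ d) (hd2 : d < 1) :
    ∃ n₀ : ℕ, ∀ n : ℕ, n₀ ≤ n →
      ∀ (V : Type) [Fintype V] [DecidableEq V], Fintype.card V = n →
      ∀ ℱ : Finset (Finset V), (∀ F ∈ ℱ, F.card = 3) →
      (∀ x : V, d * ((n : ℝ) * ((n : ℝ) - 1) / 2)
          ≤ (((ℱ.filter (fun F => x ∈ F)).card : ℝ))) →
      (1 / 2 + Real.sqrt ((4 * d - 1) / 12)) * ((n : ℝ) * ((n : ℝ) - 1) / 2)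
        ≤ ((Finset.shadow ℱ).card : ℝ) := by
  have h57 : √57 ^ 2 = 57 := Real.sq_sqrt (by norm_num)
  have hd : 1 / 4 ≤ d := by nlinarith [Real.sqrt_nonneg 57]
  have hu2 : √d ^ 2 = d := Real.sq_sqrt (by linarith)
  have hu1 : √d < 1 := (Real.sqrt_lt' one_pos).2 (by linarith)
  have he : 12 * √((4 * d - 1) / 12) ^ 2 = 4 * √d ^ 2 - 1 := by
    rw [Real.sq_sqrt (by linarith), hu2]
    ring
  have hkey := le_of_threshold_le (Real.le_sqrt_of_sq_le (by nlinarith)) hu1.le he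
  refine ⟨⌈3 / (1 - √d)⌉₊, fun n hn V _ _ hV ℱ h3 hdeg => ?_⟩
  have hn' : 3 ≤ (1 - √d) * n :=
    (div_le_iff₀' (by linarith)).1 ((Nat.le_ceil _).trans (by exact_mod_cast hn))
  subst hV
  have : Nonempty V := Fintype.card_pos_iff.1 <| by
    have : (0 : ℝ) < Fintype.card V := by nlinarith
    exact_mod_cast this
  obtain ⟨v, δ, b, hb, hlink, hcount, hhs⟩ := exists_card_shadow_bounds h3
  refine half_add_mul_le_of_counts (δ := δ) (b := b) (x := #{F ∈ ℱ | v ∈ F}) hu1 he hkey hn'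
    δ.cast_nonneg (by exact_mod_cast hb) (by rw [hu2]; exact hdeg v) ?_ ?_
    (by exact_mod_cast hhs)
  · rw [← Nat.cast_choose_two]; exact_mod_cast hlink
  · rw [← Nat.cast_choose_two]; exact_mod_cast hcount
end

section
/- For every real d with 1/4 ≤ d < (47 − 5√57)/24 there exist a constant K > 0 and n₀ such that for all n ≥ n₀ there exists a family ℱ of 3-element subsets of an n-element vertex set X with δ(ℱ) ≥ d·C(n,2) and |∂ℱ| ≤ (4√d − 2d − 1)·C(n,2) + K·n. -/
set_option maxHeartbeats 1000000

open Finset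

private lemma card_filter_val_lt (n k : ℕ) (h : k ≤ n) :
    (Finset.univ.filter fun i : Fin n => (i : ℕ) < k).card = k := by
  have e : (Finset.univ.filter fun i : Fin n => (i : ℕ) < k)
      = (Finset.range k).attachFin
        (fun m hm => lt_of_lt_of_le (Finset.mem_range.mp hm) h) := by
    ext i
    simp [Finset.mem_attachFin]
  rw [e, Finset.card_attachFin, Finset.card_range]

/-- Tightness of the minimum-degree Kruskal–Katona bound in the first range of `d`:
for `1/4 ≤ d < (47 - 5√57)/24` there are a constant `K > 0` and `n₀` such that for
every `n ≥ n₀` some triple system on `n` vertices has minimum degree at least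
`d·C(n,2)` and shadow of size at most `(4√d - 2d - 1)·C(n,2) + K·n`. -/
theorem shadow_min_degree_small_d_tight (d : ℝ) (hd1 : 1 / 4 ≤ d)
    (hd2 : d < (47 - 5 * Real.sqrt 57) / 24) :
    ∃ K : ℝ, 0 < K ∧ ∃ n₀ : ℕ, ∀ n : ℕ, n₀ ≤ n →
      ∃ ℱ : Finset (Finset (Fin n)),
        (∀ F ∈ ℱ, F.card = 3) ∧
        (∀ x : Fin n, d * ((n : ℝ) * ((n : ℝ) - 1) / 2)
            ≤ (((ℱ.filter (fun F => x ∈ F)).card : ℝ))) ∧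
        ((Finset.shadow ℱ).card : ℝ)
          ≤ (4 * Real.sqrt d - 2 * d - 1) * ((n : ℝ) * ((n : ℝ) - 1) / 2) + K * n := by
  classical
  have hd0 : (0:ℝ) ≤ d := le_trans (by norm_num) hd1
  set t := Real.sqrt d with htdef
  have ht0 : 0 ≤ t := Real.sqrt_nonneg d
  have ht2 : t ^ 2 = d := Real.sq_sqrt hd0
  have ht_half : 1/2 ≤ t := by
    have h := Real.sqrt_le_sqrt hd1
    rwa [show Real.sqrt (1/4) = 1/2 by
      rw [show (1/4 : ℝ) = (1/2)^2 by norm_num, Real.sqrt_sq (by norm_num)]] at h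
  have h57 : (7:ℝ) ≤ Real.sqrt 57 := by
    have h49 : Real.sqrt 49 ≤ Real.sqrt 57 := Real.sqrt_le_sqrt (by norm_num)
    rwa [show Real.sqrt 49 = 7 by
      rw [show (49:ℝ) = 7^2 by norm_num, Real.sqrt_sq (by norm_num)]] at h49
  have hd_half : d < 1/2 := lt_of_lt_of_le hd2 (by nlinarith)
  have ht34 : t ≤ 3/4 := by nlinarith
  refine ⟨100, by norm_num, 100, fun n hn => ?_⟩
  have hn100 : (100:ℝ) ≤ (n:ℝ) := by exact_mod_cast hn
  have hn0 : (0:ℝ) ≤ (n:ℝ) := by linarith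
  set a : ℕ := ⌈t * n⌉₊ + 3 with hadef
  have ha_lb : t * n + 3 ≤ (a:ℝ) := by
    have h := Nat.le_ceil (t * n)
    have : (a:ℝ) = (⌈t * n⌉₊ : ℝ) + 3 := by rw [hadef]; push_cast; ring
    linarith
  have ha_ub : (a:ℝ) ≤ t * n + 4 := by
    have h := Nat.ceil_lt_add_one (show (0:ℝ) ≤ t*n by positivity)
    have : (a:ℝ) = (⌈t * n⌉₊ : ℝ) + 3 := by rw [hadef]; push_cast; ring
    linarith
  have han : a ≤ n := by
    have : (a:ℝ) ≤ (n:ℝ) := by nlinarith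
    exact_mod_cast this
  have h2a : n ≤ 2 * a := by
    have : (n:ℝ) ≤ 2*(a:ℝ) := by nlinarith
    exact_mod_cast this
  set s : ℕ := 2 * a - n with hsdef
  have hs_cast : (s:ℝ) = 2*(a:ℝ) - (n:ℝ) := by
    rw [hsdef, Nat.cast_sub h2a]; push_cast; ring
  have hs_le_a : s ≤ a := by omega
  have ha3 : 3 ≤ a := by omega
  set A : Finset (Fin n) := Finset.univ.filter (fun i => (i:ℕ) < a) with hA
  set S : Finset (Fin n) := Finset.univ.filter (fun i => (i:ℕ) < s) with hS
  set B : Finset (Fin n) := Finset.univ.filter (fun i => a ≤ (i:ℕ)) with hB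
  have hcardA : A.card = a := card_filter_val_lt n a han
  have hcardS : S.card = s := card_filter_val_lt n s (le_trans hs_le_a han)
  have hcardB : B.card = n - a := by
    have hBc : B = Aᶜ := by
      ext i; simp [hA, hB, not_lt]
    rw [hBc, Finset.card_compl, hcardA, Fintype.card_fin]
  set E : Fin n → Fin n → Prop := fun i j =>
    ((i:ℕ) < a ∧ (j:ℕ) < a) ∨ (a ≤ (i:ℕ) ∧ a ≤ (j:ℕ)) ∨
      ((i:ℕ) < s ∧ a ≤ (j:ℕ)) ∨ ((j:ℕ) < s ∧ a ≤ (i:ℕ)) with hE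
  set ℱ : Finset (Finset (Fin n)) := (Finset.univ.powersetCard 3).filter
      (fun T => ∀ i ∈ T, ∀ j ∈ T, i ≠ j → E i j) with hF
  refine ⟨ℱ, ?_, ?_, ?_⟩
  · intro F hF'
    exact (Finset.mem_powersetCard.mp (Finset.mem_filter.mp hF').1).2
  · -- minimum degree
    intro x
    set N : Finset (Fin n) := (if (x:ℕ) < a then A else S ∪ B).erase x with hN
    have hxN : x ∉ N := Finset.notMem_erase x _
    have hNcard : N.card = a - 1 := by
      by_cases hx : (x:ℕ) < a
      · rw [hN, if_pos hx, Finset.card_erase_of_mem, hcardA]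
        simp [hA, hx]
      · have hdisj : Disjoint S B := by
          rw [Finset.disjoint_left]
          intro i hiS hiB
          simp only [hS, Finset.mem_filter] at hiS
          simp only [hB, Finset.mem_filter] at hiB
          omega
        have hxB : x ∈ S ∪ B := by
          simp only [hB, Finset.mem_union, Finset.mem_filter, Finset.mem_univ, true_and]
          right; omega
        rw [hN, if_neg hx, Finset.card_erase_of_mem hxB,
          Finset.card_union_of_disjoint hdisj, hcardS, hcardB]
        omega
    have hmemN : ∀ y ∈ insert x N, ((y:ℕ) < a ∧ (x:ℕ) < a) ∨
        (¬ (x:ℕ) < a ∧ ((y:ℕ) < s ∨ a ≤ (y:ℕ))) := by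
      intro y hy
      by_cases hx : (x:ℕ) < a
      · left
        refine ⟨?_, hx⟩
        rcases Finset.mem_insert.mp hy with h | h
        · omega
        · rw [hN, if_pos hx] at h
          have := Finset.mem_of_mem_erase h
          simp only [hA, Finset.mem_filter] at this
          exact this.2
      · right
        refine ⟨hx, ?_⟩
        rcases Finset.mem_insert.mp hy with h | h
        · right; omega
        · rw [hN, if_neg hx] at h
          have := Finset.mem_of_mem_erase h
          rcases Finset.mem_union.mp this with h' | h'
          · left; simp only [hS, Finset.mem_filter] at h'; exact h'.2
          · right; simp only [hB, Finset.mem_filter] at h'; exact h'.2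
    have hEdgeN : ∀ i ∈ insert x N, ∀ j ∈ insert x N, i ≠ j → E i j := by
      intro i hi j hj _
      have h1 := hmemN i hi
      have h2 := hmemN j hj
      simp only [hE]
      omega
    have hmap : ∀ P ∈ N.powersetCard 2, insert x P ∈ ℱ.filter (fun F => x ∈ F) := by
      intro P hP
      obtain ⟨hPN, hP2⟩ := Finset.mem_powersetCard.mp hP
      have hxP : x ∉ P := fun hxP => hxN (hPN hxP)
      rw [Finset.mem_filter]
      constructor
      · rw [hF, Finset.mem_filter]
        constructor
        · rw [Finset.mem_powersetCard]
          exact ⟨Finset.subset_univ _, by rw [Finset.card_insert_of_notMem hxP, hP2]⟩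
        · intro i hi j hj hij
          exact hEdgeN i (Finset.insert_subset_insert x hPN hi) j
            (Finset.insert_subset_insert x hPN hj) hij
      · exact Finset.mem_insert_self x P
    have hinj : Set.InjOn (fun P => insert x P) ((N.powersetCard 2 : Finset (Finset (Fin n))) : Set (Finset (Fin n))) := by
      intro P hP Q hQ hPQ
      have hxP : x ∉ P := fun h => hxN ((Finset.mem_powersetCard.mp hP).1 h)
      have hxQ : x ∉ Q := fun h => hxN ((Finset.mem_powersetCard.mp hQ).1 h)
      have : (insert x P).erase x = (insert x Q).erase x := by
        simp only at hPQ; rw [hPQ]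
      rwa [Finset.erase_insert hxP, Finset.erase_insert hxQ] at this
    have hcount : (a-1).choose 2 ≤ (ℱ.filter (fun F => x ∈ F)).card := by
      have h1 := Finset.card_le_card_of_injOn (fun P => insert x P) hmap hinj
      rwa [Finset.card_powersetCard, hNcard] at h1
    have hcast : (((a-1).choose 2 : ℕ) : ℝ) = ((a:ℝ)-1) * ((a:ℝ)-2) / 2 := by
      rw [Nat.cast_choose_two]
      have h1 : ((a-1 : ℕ) : ℝ) = (a:ℝ) - 1 := by
        rw [Nat.cast_sub (by omega)]; norm_num
      rw [h1]; ring
    have hfinal : d * ((n:ℝ) * ((n:ℝ)-1) / 2) ≤ ((a:ℝ)-1)*((a:ℝ)-2)/2 := by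
      have h3 : t*n+2 ≤ (a:ℝ) - 1 := by linarith
      have h4 : t*n+1 ≤ (a:ℝ) - 2 := by linarith
      have htn : (0:ℝ) ≤ t * n := mul_nonneg ht0 hn0
      have h5 : (t*(n:ℝ)+1)*(t*(n:ℝ)+2) ≤ ((a:ℝ)-2)*((a:ℝ)-1) :=
        mul_le_mul h4 h3 (by positivity) (by linarith)
      rw [← ht2]
      linarith [h5, mul_nonneg hd0 hn0, mul_nonneg (mul_nonneg ht0 ht0) hn0,
        mul_nonneg htn hn0]
    calc d * ((n:ℝ) * ((n:ℝ)-1) / 2) ≤ ((a:ℝ)-1)*((a:ℝ)-2)/2 := hfinal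
      _ = (((a-1).choose 2 : ℕ) : ℝ) := hcast.symm
      _ ≤ ((ℱ.filter (fun F => x ∈ F)).card : ℝ) := by exact_mod_cast hcount
  · -- shadow bound
    set P2 : Finset (Finset (Fin n)) := (Finset.univ.powersetCard 2).filter
        (fun P => ∀ i ∈ P, ∀ j ∈ P, i ≠ j → E i j) with hP2
    have hsub : Finset.shadow ℱ ⊆ P2 := by
      intro P hP
      obtain ⟨T, hT, y, hyT, hTy⟩ := Finset.mem_shadow_iff.mp hP
      rw [hF, Finset.mem_filter] at hT
      obtain ⟨hTpc, hTE⟩ := hT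
      have hT3 : T.card = 3 := (Finset.mem_powersetCard.mp hTpc).2
      rw [hP2, Finset.mem_filter]
      constructor
      · rw [Finset.mem_powersetCard]
        refine ⟨Finset.subset_univ _, ?_⟩
        rw [← hTy, Finset.card_erase_of_mem hyT, hT3]
      · intro i hi j hj hij
        have hiT : i ∈ T := by rw [← hTy] at hi; exact Finset.mem_of_mem_erase hi
        have hjT : j ∈ T := by rw [← hTy] at hj; exact Finset.mem_of_mem_erase hj
        exact hTE i hiT j hjT hij
    set PSB : Finset (Finset (Fin n)) := (S ×ˢ B).image (fun p => {p.1, p.2}) with hPSB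
    have hsplit : P2 ⊆ A.powersetCard 2 ∪ B.powersetCard 2 ∪ PSB := by
      intro P hP
      rw [hP2, Finset.mem_filter] at hP
      obtain ⟨hPpc, hPE⟩ := hP
      have hP2' : P.card = 2 := (Finset.mem_powersetCard.mp hPpc).2
      obtain ⟨i, j, hij, rfl⟩ := Finset.card_eq_two.mp hP2'
      have hEij : E i j := hPE i (by simp) j (by simp) hij
      simp only [hE] at hEij
      rcases hEij with ⟨h1, h2⟩ | ⟨h1, h2⟩ | ⟨h1, h2⟩ | ⟨h1, h2⟩
      · apply Finset.mem_union_left; apply Finset.mem_union_left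
        rw [Finset.mem_powersetCard]
        refine ⟨?_, hP2'⟩
        intro y hy
        simp only [Finset.mem_insert, Finset.mem_singleton] at hy
        simp only [hA, Finset.mem_filter, Finset.mem_univ, true_and]
        rcases hy with rfl | rfl
        · exact h1
        · exact h2
      · apply Finset.mem_union_left; apply Finset.mem_union_right
        rw [Finset.mem_powersetCard]
        refine ⟨?_, hP2'⟩
        intro y hy
        simp only [Finset.mem_insert, Finset.mem_singleton] at hy
        simp only [hB, Finset.mem_filter, Finset.mem_univ, true_and]
        rcases hy with rfl | rfl
        · exact h1
        · exact h2
      · apply Finset.mem_union_right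
        rw [hPSB, Finset.mem_image]
        refine ⟨(i, j), ?_, rfl⟩
        rw [Finset.mem_product]
        constructor
        · simp [hS, h1]
        · simp [hB, h2]
      · apply Finset.mem_union_right
        rw [hPSB, Finset.mem_image]
        refine ⟨(j, i), ?_, ?_⟩
        · rw [Finset.mem_product]
          constructor
          · simp [hS, h1]
          · simp [hB, h2]
        · simp [Finset.pair_comm]
    have hcount : (Finset.shadow ℱ).card ≤ a.choose 2 + (n-a).choose 2 + s * (n-a) := by
      calc (Finset.shadow ℱ).card ≤ P2.card := Finset.card_le_card hsub
        _ ≤ (A.powersetCard 2 ∪ B.powersetCard 2 ∪ PSB).card := Finset.card_le_card hsplit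
        _ ≤ (A.powersetCard 2 ∪ B.powersetCard 2).card + PSB.card := Finset.card_union_le _ _
        _ ≤ (A.powersetCard 2).card + (B.powersetCard 2).card + PSB.card := by
            have := Finset.card_union_le (A.powersetCard 2) (B.powersetCard 2)
            omega
        _ ≤ a.choose 2 + (n-a).choose 2 + s * (n-a) := by
            rw [Finset.card_powersetCard, Finset.card_powersetCard, hcardA, hcardB]
            have h1 : PSB.card ≤ s * (n - a) := by
              calc PSB.card ≤ (S ×ˢ B).card := Finset.card_image_le
                _ = s * (n-a) := by rw [Finset.card_product, hcardS, hcardB]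
            omega
    have hna_cast : (((n-a : ℕ)) : ℝ) = (n:ℝ) - (a:ℝ) := by
      rw [Nat.cast_sub han]
    have hcast : ((a.choose 2 + (n-a).choose 2 + s * (n-a) : ℕ) : ℝ)
        = (a:ℝ)*((a:ℝ)-1)/2 + ((n:ℝ)-(a:ℝ))*((n:ℝ)-(a:ℝ)-1)/2
          + (2*(a:ℝ)-(n:ℝ))*((n:ℝ)-(a:ℝ)) := by
      rw [Nat.cast_add, Nat.cast_add, Nat.cast_mul, Nat.cast_choose_two,
        Nat.cast_choose_two, hna_cast, hs_cast]
    have harith : (a:ℝ)*((a:ℝ)-1)/2 + ((n:ℝ)-(a:ℝ))*((n:ℝ)-(a:ℝ)-1)/2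
          + (2*(a:ℝ)-(n:ℝ))*((n:ℝ)-(a:ℝ))
        ≤ (4*t - 2*d - 1) * ((n:ℝ) * ((n:ℝ)-1)/2) + 100 * n := by
      rw [← ht2]
      have hA2 : (0:ℝ) ≤ 2*n - t*n - 4 - a := by nlinarith
      have hkey : (0:ℝ) ≤ (t*n + 4 - a) * (2*n - t*n - 4 - a) :=
        mul_nonneg (by linarith) hA2
      linarith [hkey, mul_nonneg ht0 hn0, mul_nonneg (mul_nonneg ht0 ht0) hn0,
        mul_nonneg (mul_nonneg ht0 hn0) hn0, mul_nonneg (mul_nonneg (mul_nonneg ht0 ht0) hn0) hn0,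
        sq_nonneg ((a:ℝ) - t*n)]
    calc ((Finset.shadow ℱ).card : ℝ)
        ≤ ((a.choose 2 + (n-a).choose 2 + s * (n-a) : ℕ) : ℝ) := by exact_mod_cast hcount
      _ = (a:ℝ)*((a:ℝ)-1)/2 + ((n:ℝ)-(a:ℝ))*((n:ℝ)-(a:ℝ)-1)/2
          + (2*(a:ℝ)-(n:ℝ))*((n:ℝ)-(a:ℝ)) := hcast
      _ ≤ (4*t - 2*d - 1) * ((n:ℝ) * ((n:ℝ)-1)/2) + 100 * n := harith
end

section
/- For every real d with (47 − 5√57)/24 ≤ d < 1 there exist a constant K > 0 and n₀ such that for all even n ≥ n₀ there exists a family ℱ of 3-element subsets of an n-element vertex set X with δ(ℱ) ≥ d·C(n,2) and |∂ℱ| ≤ (1/2 + √((4d − 1)/12))·C(n,2) + K·n. -/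
/-!
Split `n = 2m` vertices into two cliques of size `m` and join them by a `k`-regular bipartite
graph (the circulant one: `a ~ b` iff `b - a ∈ {0, …, k - 1}` mod `m`); `ℱ` is its set of
triangles. The shadow of `ℱ` lies in the edge set, of size `m (m - 1 + k)`. A vertex lies in
`C(m - 1, 2) + C(k, 2) + k (k - 1)` triangles: two more vertices of its own side, two of its `k`
cross neighbours, or a cross neighbour `t` together with one of the `k - 1` other cross
neighbours of `t`. With `k ≈ 2 s m`, `s = √((4d - 1)/12)`, the degree is
`≈ (1/4 + 3 s²) n² / 2` and the shadow `≈ (1/2 + s) n² / 2`; the linear error terms in the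
degree are absorbed because `s ≥ 1/5`.
-/

open Finset SimpleGraph
open scoped FinsetFamily

namespace Finset

variable {α : Type*} [DecidableEq α]

lemma card_powersetCard_two_union_image_sigma {S T : Finset α} (hST : Disjoint S T)
    {R : α → Finset α} (hR : ∀ t ∈ T, R t ⊆ S) :
    #(S.powersetCard 2 ∪ T.powersetCard 2 ∪ (T.sigma R).image fun p ↦ {p.1, p.2}) =
      (#S).choose 2 + (#T).choose 2 + ∑ t ∈ T, #(R t) := by
  have hne : ∀ ⦃a b⦄, a ∈ T → b ∈ S → a ≠ b := fun a b ha hb hab ↦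
    disjoint_left.1 hST (hab ▸ hb) ha
  have hpow : Disjoint (S.powersetCard 2) (T.powersetCard 2) :=
    disjoint_left.2 fun s hsS hsT ↦ by
      rw [mem_powersetCard] at hsS hsT
      obtain ⟨w, hw⟩ := card_pos.1 (hsS.2.symm ▸ two_pos)
      exact disjoint_left.1 hST (hsS.1 hw) (hsT.1 hw)
  have hmixed : Disjoint (S.powersetCard 2 ∪ T.powersetCard 2)
      ((T.sigma R).image fun p ↦ {p.1, p.2}) :=
    disjoint_left.2 fun s hs hsC ↦ by
      obtain ⟨⟨t, u⟩, htu, rfl⟩ := mem_image.1 hsC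
      rw [mem_sigma] at htu
      rcases mem_union.1 hs with hs | hs <;> rw [mem_powersetCard, insert_subset_iff] at hs
      · exact disjoint_left.1 hST hs.1.1 htu.1
      · exact disjoint_left.1 hST (hR t htu.1 htu.2) (hs.1.2 (mem_singleton_self u))
  rw [card_union_of_disjoint hmixed, card_union_of_disjoint hpow, card_powersetCard,
    card_powersetCard, card_image_of_injOn, card_sigma]
  rintro ⟨t, u⟩ htu ⟨t', u'⟩ htu' heq
  simp only [coe_sigma, Set.mem_sigma_iff, mem_coe] at htu htu'
  dsimp only at heq
  have ht : t ∈ ({t', u'} : Finset α) := heq ▸ by simp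
  have hu : u ∈ ({t', u'} : Finset α) := heq ▸ by simp
  simp only [mem_insert, mem_singleton] at ht hu
  obtain rfl : t = t' := ht.resolve_right (hne htu.1 (hR _ htu'.1 htu'.2))
  obtain rfl : u = u' := hu.resolve_left (hne htu.1 (hR _ htu.1 htu.2)).symm
  rfl

end Finset

namespace SimpleGraph

variable {V W : Type*} [Fintype V]

section Cliques

variable [DecidableEq V] (G : SimpleGraph V) [DecidableRel G.Adj]

lemma shadow_cliqueFinset_subset (n : ℕ) : ∂ (G.cliqueFinset (n + 1)) ⊆ G.cliqueFinset n := by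
  intro t ht
  obtain ⟨s, hs, a, ha, rfl⟩ := mem_shadow_iff.1 ht
  rw [mem_cliqueFinset_iff] at hs ⊢
  exact hs.erase_of_mem ha

lemma card_cliqueFinset_two_le : #(G.cliqueFinset 2) ≤ #G.edgeFinset := by
  refine (card_le_card fun s hs ↦ ?_).trans (card_image_le (f := Sym2.toFinset))
  obtain ⟨hs, hs2⟩ := mem_cliqueFinset_iff.1 hs
  obtain ⟨a, b, hab, rfl⟩ := card_eq_two.1 hs2
  refine mem_image.2 ⟨s(a, b), ?_, Sym2.toFinset_mk_eq⟩
  rw [mem_edgeFinset, mem_edgeSet]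
  exact hs (by simp) (by simp) hab

lemma card_cliqueFinset_filter_subset_neighborFinset (v : V) (n : ℕ) :
    #{s ∈ G.cliqueFinset n | s ⊆ G.neighborFinset v} =
      #{t ∈ G.cliqueFinset (n + 1) | v ∈ t} := by
  have hv : ∀ s, s ⊆ G.neighborFinset v → v ∉ s := fun s hs hv ↦ by simpa using hs hv
  refine card_nbij' (insert v) (erase · v) (fun s hs ↦ ?_) (fun t ht ↦ ?_) (fun s hs ↦ ?_)
    (fun t ht ↦ ?_)
  · simp only [mem_coe, mem_filter, mem_cliqueFinset_iff] at hs ⊢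
    exact ⟨hs.1.insert fun w hw ↦ by simpa using hs.2 hw, mem_insert_self v s⟩
  · simp only [mem_coe, mem_filter, mem_cliqueFinset_iff] at ht ⊢
    refine ⟨ht.1.erase_of_mem ht.2, fun w hw ↦ ?_⟩
    rw [mem_erase] at hw
    simpa using ht.1.isClique ht.2 hw.2 (Ne.symm hw.1)
  · simp only [mem_coe, mem_filter] at hs
    exact erase_insert (hv s hs.2)
  · simp only [mem_coe, mem_filter] at ht
    exact insert_erase ht.2

end Cliques

structure IsDoubleClique (G : SimpleGraph V) [DecidableRel G.Adj] (side : V → Bool) (m k : ℕ) :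
    Prop where
  adj_of_side_eq ⦃u v : V⦄ : side u = side v → u ≠ v → G.Adj u v
  card_side (v : V) : #{w | side w = side v} = m
  card_crossNeighbors (v : V) : #{w ∈ G.neighborFinset v | side w ≠ side v} = k

namespace IsDoubleClique

variable {G : SimpleGraph V} [DecidableRel G.Adj] {side : V → Bool} {m k : ℕ}

lemma isClique_of_forall_side_eq (h : G.IsDoubleClique side m k) {s : Finset V} (c : Bool)
    (hs : ∀ w ∈ s, side w = c) : G.IsClique (s : Set V) :=
  fun _ ha _ hb hab ↦ h.adj_of_side_eq ((hs _ ha).trans (hs _ hb).symm) hab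

lemma comap [Fintype W] (h : G.IsDoubleClique side m k) (e : W ≃ V) :
    (G.comap e).IsDoubleClique (side ∘ e) m k where
  adj_of_side_eq _ _ huv hne := h.adj_of_side_eq huv (e.injective.ne hne)
  card_side v := by rw [← h.card_side (e v)]; exact card_equiv e (by simp)
  card_crossNeighbors v := by rw [← h.card_crossNeighbors (e v)]; exact card_equiv e (by simp)

variable [DecidableEq V]

lemma filter_neighborFinset_side_eq (h : G.IsDoubleClique side m k) (v : V) :
    {w ∈ G.neighborFinset v | side w = side v} =
      ({w | side w = side v} : Finset V).erase v := by
  ext w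
  simp only [mem_filter, mem_neighborFinset, mem_erase, mem_univ, true_and]
  exact ⟨fun hw ↦ ⟨hw.1.ne', hw.2⟩,
    fun hw ↦ ⟨h.adj_of_side_eq hw.2.symm hw.1.symm, hw.2⟩⟩

lemma degree_eq (h : G.IsDoubleClique side m k) (v : V) : G.degree v = m - 1 + k := by
  rw [← card_neighborFinset_eq_degree,
    ← card_filter_add_card_filter_not (fun w ↦ side w = side v),
    h.filter_neighborFinset_side_eq, card_erase_of_mem (by simp), h.card_side,
    ← h.card_crossNeighbors v]

lemma two_mul_card_edgeFinset (h : G.IsDoubleClique side m k) :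
    2 * #G.edgeFinset = Fintype.card V * (m - 1 + k) := by
  rw [← sum_degrees_eq_twice_card_edges, sum_congr rfl fun v _ ↦ h.degree_eq v, sum_const,
    card_univ, smul_eq_mul]

lemma card_neighborFinset_inter_erase (h : G.IsDoubleClique side m k) {v t : V}
    (ht : t ∈ {w ∈ G.neighborFinset v | side w ≠ side v}) :
    #(G.neighborFinset t ∩ ({w | side w = side v} : Finset V).erase v) = k - 1 := by
  obtain ⟨hvt, htv⟩ := mem_filter.1 ht
  have hside : ∀ w, side w = side v ↔ side w ≠ side t := fun w ↦ by
    revert htv; cases side w <;> cases side t <;> cases side v <;> decide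
  have : G.neighborFinset t ∩ ({w | side w = side v} : Finset V).erase v =
      ({w ∈ G.neighborFinset t | side w ≠ side t} : Finset V).erase v := by
    ext w
    simp only [mem_inter, mem_erase, mem_filter, mem_univ, true_and, hside]
    tauto
  rw [this, card_erase_of_mem, h.card_crossNeighbors]
  simpa [Ne.symm htv] using ((mem_neighborFinset _ _ _).1 hvt).symm

lemma le_card_cliqueFinset_filter_mem (h : G.IsDoubleClique side m k) (v : V) :
    (m - 1).choose 2 + k.choose 2 + k * (k - 1) ≤ #{t ∈ G.cliqueFinset 3 | v ∈ t} := by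
  rw [← card_cliqueFinset_filter_subset_neighborFinset]
  set S := ({w | side w = side v} : Finset V).erase v
  set T := {w ∈ G.neighborFinset v | side w ≠ side v}
  have hS : ∀ w ∈ S, side w = side v := fun w hw ↦ by simpa using (mem_erase.1 hw).2
  have hT : ∀ w ∈ T, side w = !side v := fun w hw ↦ Bool.eq_not_iff.2 (mem_filter.1 hw).2
  have hSN : S ⊆ G.neighborFinset v := fun w hw ↦ by
    simpa using h.adj_of_side_eq (hS w hw).symm (mem_erase.1 hw).1.symm
  have hTN : T ⊆ G.neighborFinset v := filter_subset _ _
  have hP : ∀ s ⊆ G.neighborFinset v, #s = 2 → G.IsClique (s : Set V) →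
      s ∈ {s ∈ G.cliqueFinset 2 | s ⊆ G.neighborFinset v} := fun s hsN hs2 hs ↦
    mem_filter.2 ⟨mem_cliqueFinset_iff.2 ⟨hs, hs2⟩, hsN⟩
  calc (m - 1).choose 2 + k.choose 2 + k * (k - 1)
      = #(S.powersetCard 2 ∪ T.powersetCard 2 ∪
          (T.sigma fun t ↦ G.neighborFinset t ∩ S).image fun p ↦ {p.1, p.2}) := by
        rw [card_powersetCard_two_union_image_sigma (Finset.disjoint_left.2 fun w hwS hwT ↦ by
            simpa [hS w hwS] using hT w hwT) fun _ _ ↦ inter_subset_right,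
          sum_congr rfl fun t ht ↦ h.card_neighborFinset_inter_erase ht, sum_const,
          smul_eq_mul, card_erase_of_mem (by simp), h.card_side, h.card_crossNeighbors]
    _ ≤ _ := by
      refine card_le_card (union_subset (union_subset ?_ ?_) ?_) <;> intro s hs
      · rw [mem_powersetCard] at hs
        exact hP s (hs.1.trans hSN) hs.2
          (h.isClique_of_forall_side_eq _ fun w hw ↦ hS w (hs.1 hw))
      · rw [mem_powersetCard] at hs
        exact hP s (hs.1.trans hTN) hs.2
          (h.isClique_of_forall_side_eq _ fun w hw ↦ hT w (hs.1 hw))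
      · obtain ⟨⟨t, u⟩, htu, rfl⟩ := mem_image.1 hs
        simp only [mem_sigma, mem_inter, mem_neighborFinset] at htu
        refine hP _ (insert_subset (hTN htu.1) (singleton_subset_iff.2 (hSN htu.2.2)))
          (card_pair htu.2.1.ne) ?_
        rw [coe_pair, isClique_pair]
        exact fun _ ↦ htu.2.1

end IsDoubleClique

def circulantDoubleClique (m k : ℕ) : SimpleGraph (Bool × Fin m) :=
  fromRel fun p q ↦ p.1 = q.1 ∨ (p.1 = false ∧ q.1 = true ∧ ((q.2 - p.2 : Fin m) : ℕ) < k)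

instance (m k : ℕ) : DecidableRel (circulantDoubleClique m k).Adj :=
  inferInstanceAs (DecidableRel (fromRel _).Adj)

lemma isDoubleClique_circulantDoubleClique {m k : ℕ} [NeZero m] (hkm : k ≤ m) :
    (circulantDoubleClique m k).IsDoubleClique Prod.fst m k where
  adj_of_side_eq _ _ huv hne := by simp [circulantDoubleClique, huv, hne]
  card_side v := by
    refine (card_nbij' Prod.snd (v.1, ·) ?_ ?_ ?_ ?_).trans (card_fin m) <;> intro w hw <;>
      simp_all [Prod.ext_iff]
  card_crossNeighbors v := by
    refine Eq.trans ?_ (Fin.card_filter_val_lt.trans (min_eq_right hkm))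
    obtain ⟨_ | _, a⟩ := v
    · refine card_nbij' (·.2 - a) (fun c ↦ (true, c + a)) ?_ ?_ ?_ ?_ <;> intro w hw <;>
        simp only [mem_coe, mem_filter, mem_univ, true_and, mem_neighborFinset] at hw ⊢ <;>
        aesop (add simp [circulantDoubleClique, Prod.ext_iff])
    · refine card_nbij' (a - ·.2) (fun c ↦ (false, a - c)) ?_ ?_ ?_ ?_ <;> intro w hw <;>
        simp only [mem_coe, mem_filter, mem_univ, true_and, mem_neighborFinset] at hw ⊢ <;>
        aesop (add simp [circulantDoubleClique, Prod.ext_iff])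

end SimpleGraph

theorem exists_threeUniform_le_degree_shadow_le {V : Type*} [Fintype V] [DecidableEq V]
    {m k : ℕ} [NeZero m] (hkm : k ≤ m) (hV : Fintype.card V = m + m) :
    ∃ ℱ : Finset (Finset V), (∀ F ∈ ℱ, #F = 3) ∧
      (∀ x, (m - 1).choose 2 + k.choose 2 + k * (k - 1) ≤ #{F ∈ ℱ | x ∈ F}) ∧
      #(∂ ℱ) ≤ m * (m - 1 + k) := by
  let e : V ≃ Bool × Fin m := Fintype.equivOfCardEq (by simp; omega)
  let G := (circulantDoubleClique m k).comap e
  have hG : G.IsDoubleClique _ m k := (isDoubleClique_circulantDoubleClique hkm).comap e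
  refine ⟨G.cliqueFinset 3, fun F hF ↦ (mem_cliqueFinset_iff.1 hF).card_eq,
    hG.le_card_cliqueFinset_filter_mem, ?_⟩
  have hE : 2 * #G.edgeFinset = 2 * (m * (m - 1 + k)) := by
    rw [hG.two_mul_card_edgeFinset, hV]; ring
  exact ((card_le_card (shadow_cliqueFinset_subset G 2)).trans
    (card_cliqueFinset_two_le G)).trans (by omega)

lemma le_choose_two_add_choose_two_add_mul {s : ℝ} {m k : ℕ} (hs : 1 / 5 ≤ s) (hm : 1 ≤ m)
    (hk : 2 * s * m + 2 ≤ k) :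
    (3 * s ^ 2 + 1 / 4) * (2 * m * (2 * m - 1) / 2) ≤
      (((m - 1).choose 2 + k.choose 2 + k * (k - 1) : ℕ) : ℝ) := by
  have hk1 : 1 ≤ k := by exact_mod_cast (show (1 : ℝ) ≤ k by nlinarith)
  have hkk : (2 * s * m + 2) * (2 * s * m + 1) ≤ (k : ℝ) * (k - 1) := by
    have : 0 ≤ s * m := by positivity
    nlinarith
  push_cast [Nat.cast_choose_two, Nat.cast_sub hm, Nat.cast_sub hk1]
  have hs' : 0 ≤ 9 * s + 3 * s ^ 2 - 5 / 4 := by nlinarith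
  nlinarith [mul_nonneg (Nat.cast_nonneg m : (0 : ℝ) ≤ m) hs']

lemma mul_sub_one_add_le {s : ℝ} {m k : ℕ} (hs : s ≤ 3 / 2) (hm : 1 ≤ m)
    (hk : k ≤ 2 * s * m + 3) :
    ((m * (m - 1 + k) : ℕ) : ℝ) ≤ (1 / 2 + s) * (2 * m * (2 * m - 1) / 2) + 2 * (2 * m) := by
  push_cast [Nat.cast_sub hm]
  nlinarith [mul_nonneg (by positivity : (0 : ℝ) ≤ m) (by linarith : (0 : ℝ) ≤ 3 / 2 - s)]

/-- Tightness of the minimum-degree Kruskal–Katona bound in the second range of `d`: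
for `(47 - 5√57)/24 ≤ d < 1` there are a constant `K > 0` and `n₀` such that for
every even `n ≥ n₀` some triple system on `n` vertices has minimum degree at least
`d·C(n,2)` and shadow of size at most `(1/2 + √((4d-1)/12))·C(n,2) + K·n`. -/
theorem shadow_min_degree_large_d_tight (d : ℝ)
    (hd1 : (47 - 5 * Real.sqrt 57) / 24 ≤ d) (hd2 : d < 1) :
    ∃ K : ℝ, 0 < K ∧ ∃ n₀ : ℕ, ∀ n : ℕ, n₀ ≤ n → Even n →
      ∃ ℱ : Finset (Finset (Fin n)),
        (∀ F ∈ ℱ, F.card = 3) ∧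
        (∀ x : Fin n, d * ((n : ℝ) * ((n : ℝ) - 1) / 2)
            ≤ (((ℱ.filter (fun F => x ∈ F)).card : ℝ))) ∧
        ((Finset.shadow ℱ).card : ℝ)
          ≤ (1 / 2 + Real.sqrt ((4 * d - 1) / 12)) * ((n : ℝ) * ((n : ℝ) - 1) / 2)
            + K * n := by
  set s := √((4 * d - 1) / 12)
  have h57 : √57 ≤ 7.6 := Real.sqrt_le_iff.2 ⟨by norm_num, by norm_num⟩
  have hs_sq : s ^ 2 = (4 * d - 1) / 12 := Real.sq_sqrt (by linarith)
  have hs_lb : 1 / 5 ≤ s := by nlinarith [Real.sqrt_nonneg ((4 * d - 1) / 12)]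
  have hs_ub : s < 1 / 2 := by nlinarith
  refine ⟨2, two_pos, 2 * ⌈3 / (1 - 2 * s)⌉₊, fun n hn ⟨m, hnm⟩ ↦ ?_⟩
  set k := ⌈2 * s * m⌉₊ + 2
  have hk_lb : 2 * s * m + 2 ≤ k := by push_cast [k]; linarith [Nat.le_ceil (2 * s * m)]
  have hk_ub : (k : ℝ) ≤ 2 * s * m + 3 := by
    push_cast [k]; linarith [Nat.ceil_lt_add_one (by positivity : 0 ≤ 2 * s * m)]
  have hkm : k ≤ m := by
    have : 3 / (1 - 2 * s) ≤ m := (Nat.le_ceil _).trans (by exact_mod_cast (by omega : _ ≤ m))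
    rw [div_le_iff₀ (by linarith)] at this
    exact_mod_cast (by nlinarith : (k : ℝ) ≤ m)
  have : NeZero m := ⟨by omega⟩
  obtain ⟨ℱ, hℱ, hdeg, hshadow⟩ :=
    exists_threeUniform_le_degree_shadow_le hkm ((Fintype.card_fin n).trans hnm)
  have hn : (n : ℝ) = 2 * m := by norm_cast; omega
  refine ⟨ℱ, hℱ, fun x ↦ ?_, ?_⟩ <;> rw [hn]
  · rw [show d = 3 * s ^ 2 + 1 / 4 by linarith]
    exact (le_choose_two_add_choose_two_add_mul hs_lb (by omega) hk_lb).trans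
      (by exact_mod_cast hdeg x)
  · exact (Nat.cast_le.2 hshadow).trans (mul_sub_one_add_le (by linarith) (by omega) hk_ub)
end

section
/- Let t ≥ 0 be a real number and let G be a graph on n ≥ 1 vertices in which every vertex has triangle-degree at least C(t,2). Then e(G) ≥ C(t,2) + δ(n − δ) − C(n − δ − 1, 2), where δ = δ(G) is the minimum degree of G. -/
/-!
Let `u` be a vertex of minimum degree `δ` and `S` the complement of its neighbourhood `N(u)`,
so `|S| = n - δ`. Counting every edge by its number of endpoints in `S` gives
`∑_{v ∈ S} deg v + e(N(u)) = e(G) + e(S)`. On the left, the degree sum is at least `δ(n - δ)`,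
and each triangle through `u` yields a distinct edge inside `N(u)`, so `e(N(u)) ≥ C(t,2)`. On the
right, `u ∈ S` has no neighbour in `S`, so `e(S) ≤ C(n - δ - 1, 2)`.
-/

/-- Real binomial coefficient `C(y,2) = y(y-1)/2`. -/
noncomputable def rb2 (y : ℝ) : ℝ := y * (y - 1) / 2

/-- The triangle-degree of `v`: the number of triangles of `G` containing `v`. -/
def triangleDeg {V : Type*} [Fintype V] [DecidableEq V]
    (G : SimpleGraph V) [DecidableRel G.Adj] (v : V) : ℕ :=
  ((G.cliqueFinset 3).filter (fun s => v ∈ s)).card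

open Finset

namespace SimpleGraph

variable {V : Type*} [Fintype V] [DecidableEq V] (G : SimpleGraph V) [DecidableRel G.Adj]

lemma card_filter_mem_add_ite_mem_sym2_compl {e : Sym2 V} (he : ¬e.IsDiag)
    (s : Finset V) :
    #{v ∈ s | v ∈ e} + (if e ∈ sᶜ.sym2 then 1 else 0) = 1 + (if e ∈ s.sym2 then 1 else 0) := by
  induction e with
  | h x y =>
    rw [Sym2.mk_isDiag_iff] at he
    have hfilter : {v ∈ s | v ∈ s(x, y)} = s ∩ {x, y} := by ext; simp [and_comm]
    rw [hfilter]
    by_cases hx : x ∈ s <;> by_cases hy : y ∈ s <;>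
      simp [hx, hy, he, inter_insert_of_mem, inter_insert_of_notMem]

lemma sum_degree_eq_sum_card_filter_mem (s : Finset V) :
    ∑ v ∈ s, G.degree v = ∑ e ∈ G.edgeFinset, #{v ∈ s | v ∈ e} := by
  simp_rw [← card_incidenceFinset_eq_degree, incidenceFinset_eq_filter, card_filter]
  exact sum_comm

lemma sum_degree_add_card_edges_mem_sym2_compl (s : Finset V) :
    ∑ v ∈ s, G.degree v + #{e ∈ G.edgeFinset | e ∈ sᶜ.sym2}
      = #G.edgeFinset + #{e ∈ G.edgeFinset | e ∈ s.sym2} := by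
  rw [sum_degree_eq_sum_card_filter_mem, card_filter, card_filter, card_eq_sum_ones,
    ← sum_add_distrib, ← sum_add_distrib]
  exact sum_congr rfl fun e he =>
    card_filter_mem_add_ite_mem_sym2_compl (G.not_isDiag_of_mem_edgeSet (mem_edgeFinset.1 he)) s

lemma card_edges_mem_sym2_le_choose (s : Finset V) :
    #{e ∈ G.edgeFinset | e ∈ s.sym2} ≤ (#s).choose 2 := by
  rw [← Sym2.card_image_offDiag]
  refine card_le_card fun e he => ?_
  induction e with
  | h x y =>
    simp only [mem_filter, mem_edgeFinset, mem_edgeSet, Finset.mk_mem_sym2_iff] at he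
    exact mem_image.2 ⟨(x, y), mem_offDiag.2 ⟨he.2.1, he.2.2, he.1.ne⟩, rfl⟩

lemma card_edges_mem_sym2_compl_neighborFinset_le (u : V) :
    #{e ∈ G.edgeFinset | e ∈ (G.neighborFinset u)ᶜ.sym2}
      ≤ (#(G.neighborFinset u)ᶜ - 1).choose 2 := by
  have huN : u ∈ (G.neighborFinset u)ᶜ := by simp
  rw [← card_erase_of_mem huN]
  refine le_trans (card_le_card fun e he => ?_) (G.card_edges_mem_sym2_le_choose _)
  induction e with
  | h x y =>
    simp only [mem_filter, mem_edgeFinset, mem_edgeSet, Finset.mk_mem_sym2_iff, mem_compl,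
      mem_neighborFinset, mem_erase] at he ⊢
    obtain ⟨hxy, hx, hy⟩ := he
    refine ⟨hxy, ⟨?_, hx⟩, ?_, hy⟩ <;> rintro rfl
    exacts [hy hxy, hx hxy.symm]

lemma triangleDeg_le_card_edges_mem_sym2_neighborFinset (v : V) :
    triangleDeg G v ≤ #{e ∈ G.edgeFinset | e ∈ (G.neighborFinset v).sym2} := by
  refine card_le_card_of_surjOn (fun e => insert v e.toFinset) fun s hs => ?_
  simp only [coe_filter, Set.mem_ofPred_eq, mem_cliqueFinset_iff] at hs
  obtain ⟨⟨hclique, hcard⟩, hvs⟩ := hs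
  obtain ⟨a, b, hab, hsab⟩ := card_eq_two.1 (by rw [card_erase_of_mem hvs, hcard] :
    #(s.erase v) = 2)
  have mem_s : ∀ w ∈ ({a, b} : Finset V), w ∈ s ∧ w ≠ v := fun w hw => by
    rw [← hsab, mem_erase] at hw; exact hw.symm
  have ha := mem_s a (by simp)
  have hb := mem_s b (by simp)
  refine ⟨s(a, b), ?_, ?_⟩
  · simp only [coe_filter, Set.mem_ofPred_eq, mem_edgeFinset, mem_edgeSet, mk_mem_sym2_iff,
      mem_neighborFinset]
    exact ⟨hclique ha.1 hb.1 hab, hclique hvs ha.1 ha.2.symm, hclique hvs hb.1 hb.2.symm⟩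
  · simp only [Sym2.toFinset_mk_eq, ← hsab, insert_erase hvs]

end SimpleGraph

lemma rb2_natCast (m : ℕ) : rb2 m = m.choose 2 := by
  rw [rb2, Nat.cast_choose_two]

theorem edges_ge_f_minDegree_general (t : ℝ)
    (V : Type) [Fintype V] [DecidableEq V] (n : ℕ) (hn : 1 ≤ n)
    (hV : Fintype.card V = n)
    (G : SimpleGraph V) [DecidableRel G.Adj]
    (hdeg : ∀ v : V, rb2 t ≤ (triangleDeg G v : ℝ)) :
    rb2 t + (G.minDegree : ℝ) * ((n : ℝ) - G.minDegree)
        - rb2 ((n : ℝ) - G.minDegree - 1)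
      ≤ (G.edgeFinset.card : ℝ) := by
  have : Nonempty V := Fintype.card_pos_iff.1 (by omega)
  obtain ⟨u, hu⟩ := G.exists_minimal_degree_vertex
  set s := (G.neighborFinset u)ᶜ
  have hδn : G.minDegree < n := hu ▸ hV ▸ G.degree_lt_card_verts u
  have hs : #s = n - G.minDegree := by
    rw [card_compl, G.card_neighborFinset_eq_degree, hu, hV]
  have hdegrees : #s * G.minDegree ≤ ∑ v ∈ s, G.degree v := by
    simpa using card_nsmul_le_sum s (fun v => G.degree v) _ fun v _ => G.minDegree_le_degree v
  have hinside : #{e ∈ G.edgeFinset | e ∈ s.sym2} ≤ (#s - 1).choose 2 :=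
    G.card_edges_mem_sym2_compl_neighborFinset_le u
  have hcount := G.sum_degree_add_card_edges_mem_sym2_compl s
  have htriangles : rb2 t ≤ #{e ∈ G.edgeFinset | e ∈ sᶜ.sym2} := by
    rw [compl_compl]
    exact (hdeg u).trans (mod_cast G.triangleDeg_le_card_edges_mem_sym2_neighborFinset u)
  have hnat : #{e ∈ G.edgeFinset | e ∈ sᶜ.sym2} + (n - G.minDegree) * G.minDegree
      ≤ #G.edgeFinset + (n - G.minDegree - 1).choose 2 := by
    rw [hs] at hdegrees hinside; omega
  have hcast : ((n - G.minDegree - 1 : ℕ) : ℝ) = n - G.minDegree - 1 := by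
    rw [Nat.cast_sub (by omega), Nat.cast_sub hδn.le, Nat.cast_one]
  rw [← hcast, rb2_natCast]
  have hreal := (Nat.cast_le (α := ℝ)).2 hnat
  push_cast [Nat.cast_sub hδn.le] at hreal
  linarith

/-- Proposition 2.1: if every vertex of an `n`-vertex graph `G` lies in at least
`C(t,2)` triangles (`t ≥ 0`), then `e(G) ≥ C(t,2) + δ(n-δ) - C(n-δ-1,2)`,
where `δ = δ(G)` is the minimum degree. -/
theorem edges_ge_f_minDegree (t : ℝ) (ht : 0 ≤ t)
    (V : Type) [Fintype V] [DecidableEq V] (n : ℕ) (hn : 1 ≤ n)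
    (hV : Fintype.card V = n)
    (G : SimpleGraph V) [DecidableRel G.Adj]
    (hdeg : ∀ v : V, rb2 t ≤ (triangleDeg G v : ℝ)) :
    rb2 t + (G.minDegree : ℝ) * ((n : ℝ) - G.minDegree)
        - rb2 ((n : ℝ) - G.minDegree - 1)
      ≤ (G.edgeFinset.card : ℝ) :=
  edges_ge_f_minDegree_general t V n hn hV G hdeg
end

section
/- Let n be a positive integer and t a real number with n/2 − 1 ≤ t ≤ n − 2. Let G be the graph on an n-element vertex set V whose edge set is the union of the edge sets of two complete graphs on vertex sets A and B, where |A| = |B| = ⌈t⌉ + 1 and A ∪ B = V (so |A ∩ B| = 2⌈t⌉ + 2 − n). Then every vertex of G has triangle-degree at least C(t,2), e(G) = C(n,2) − (n − 1 − ⌈t⌉)², and e(G) ≤ f(t) + n, where f(x) = C(t,2) + x(n − x) − C(n − x − 1, 2). -/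
/-- The function `f(x) = C(t,2) + x(n-x) - C(n-x-1,2)`. -/
noncomputable def fFun (n : ℕ) (t x : ℝ) : ℝ :=
  rb2 t + x * ((n : ℝ) - x) - rb2 ((n : ℝ) - x - 1)

/-!
The sets `A` and `B` are cliques of size `⌈t⌉ + 1` covering all vertices, so every vertex lies in
at least `C(⌈t⌉, 2) ≥ C(t, 2)` triangles. The non-edges of `G` are exactly the pairs between
`A \ B` and `B \ A`, both of size `n - 1 - ⌈t⌉`, which gives the edge count; the bound by
`f(t) + n` is then an inequality between polynomials in `n`, `t` and `⌈t⌉ ∈ [t, t + 1)`.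
-/

open Finset

namespace SimpleGraph

variable {V : Type*} [Fintype V] [DecidableEq V] (G : SimpleGraph V) [DecidableRel G.Adj]

theorem card_edgeFinset_add_card_edgeFinset_compl :
    #G.edgeFinset + #Gᶜ.edgeFinset = (Fintype.card V).choose 2 := by
  rw [← card_union_of_disjoint (disjoint_edgeFinset.mpr disjoint_compl_right), ← edgeFinset_sup]
  convert card_edgeFinset_top_eq_card_choose_two (V := V) using 3
  exact sup_compl_eq_top

variable {G}

theorem choose_two_le_triangleDeg_of_isClique {S : Finset V} (hS : G.IsClique (S : Set V))
    {v : V} (hv : v ∈ S) : (#S - 1).choose 2 ≤ triangleDeg G v := by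
  rw [triangleDeg, ← card_erase_of_mem hv, ← card_powersetCard]
  refine card_le_card_of_injOn (insert v) (fun s hs => ?_) (fun s hs s' hs' h => ?_)
  · rw [mem_coe, mem_powersetCard, subset_erase] at hs
    rw [mem_coe, mem_filter, mem_cliqueFinset_iff]
    refine ⟨⟨hS.subset ?_, ?_⟩, mem_insert_self v s⟩
    · exact coe_subset.mpr (insert_subset hv hs.1.1)
    · rw [card_insert_of_notMem hs.1.2, hs.2]
  · rw [mem_coe, mem_powersetCard, subset_erase] at hs hs'
    rw [← erase_insert hs.1.2, ← erase_insert hs'.1.2]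
    exact congrArg (erase · v) h

end SimpleGraph

section TwoCliques

variable {V : Type*} [Fintype V] [DecidableEq V] {A B : Finset V}
  {G : SimpleGraph V} [DecidableRel G.Adj]

theorem compl_edgeFinset_eq_image_sdiff_product (hAB : A ∪ B = univ)
    (hAdj : ∀ u v : V, G.Adj u v ↔ u ≠ v ∧ ((u ∈ A ∧ v ∈ A) ∨ (u ∈ B ∧ v ∈ B))) :
    Gᶜ.edgeFinset = ((A \ B) ×ˢ (B \ A)).image Sym2.mk.uncurry := by
  have hcover (x : V) : x ∈ A ∨ x ∈ B := mem_union.mp (hAB ▸ mem_univ x)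
  ext e
  induction e using Sym2.ind with
  | h u v =>
    have := hcover u
    have := hcover v
    simp only [SimpleGraph.mem_edgeFinset, SimpleGraph.mem_edgeSet, SimpleGraph.compl_adj, hAdj,
      mem_image, mem_product, mem_sdiff, Prod.exists, Function.uncurry_apply_pair, Sym2.eq_iff]
    grind

theorem card_edgeFinset_add_card_sdiff_mul_card_sdiff (hAB : A ∪ B = univ)
    (hAdj : ∀ u v : V, G.Adj u v ↔ u ≠ v ∧ ((u ∈ A ∧ v ∈ A) ∨ (u ∈ B ∧ v ∈ B))) :
    #G.edgeFinset + #(A \ B) * #(B \ A) = (Fintype.card V).choose 2 := by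
  rw [← G.card_edgeFinset_add_card_edgeFinset_compl,
    compl_edgeFinset_eq_image_sdiff_product hAB hAdj, card_image_of_injOn, card_product]
  rintro ⟨a, b⟩ hab ⟨a', b'⟩ hab' h
  simp only [coe_product, Set.mem_prod, mem_coe, mem_sdiff] at hab hab'
  rcases Sym2.mk_eq_mk_iff.mp h with h | h
  · exact h
  · simp only [Prod.swap_prod_mk, Prod.mk.injEq] at h
    exact absurd (h.1 ▸ hab'.2.1) hab.1.2

theorem card_edgeFinset_eq_of_card_eq_succ (hAB : A ∪ B = univ)
    (hAdj : ∀ u v : V, G.Adj u v ↔ u ≠ v ∧ ((u ∈ A ∧ v ∈ A) ∨ (u ∈ B ∧ v ∈ B)))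
    {k : ℕ} (hA : #A = k + 1) (hB : #B = k + 1) :
    (#G.edgeFinset : ℝ) = (Fintype.card V : ℝ) * ((Fintype.card V : ℝ) - 1) / 2
      - ((Fintype.card V : ℝ) - 1 - k) ^ 2 := by
  have hcount : (#G.edgeFinset : ℝ) + #(A \ B) * #(B \ A)
      = (Fintype.card V : ℝ) * ((Fintype.card V : ℝ) - 1) / 2 := by
    rw [← Nat.cast_choose_two]
    exact_mod_cast card_edgeFinset_add_card_sdiff_mul_card_sdiff hAB hAdj
  have hAB_card : (#(A \ B) : ℝ) = Fintype.card V - 1 - k := by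
    rw [← card_univ, ← hAB, ← card_sdiff_add_card, hB]; push_cast; ring
  have hBA_card : (#(B \ A) : ℝ) = Fintype.card V - 1 - k := by
    rw [← card_univ, ← hAB, union_comm, ← card_sdiff_add_card, hA]; push_cast; ring
  rw [hAB_card, hBA_card] at hcount
  linarith

theorem choose_two_le_triangleDeg_of_card_eq_succ (hAB : A ∪ B = univ)
    (hAdj : ∀ u v : V, G.Adj u v ↔ u ≠ v ∧ ((u ∈ A ∧ v ∈ A) ∨ (u ∈ B ∧ v ∈ B)))
    {k : ℕ} (hA : #A = k + 1) (hB : #B = k + 1) (v : V) : k.choose 2 ≤ triangleDeg G v := by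
  have hcliqueA : G.IsClique (A : Set V) := fun u hu w hw huw =>
    (hAdj u w).2 ⟨huw, .inl ⟨hu, hw⟩⟩
  have hcliqueB : G.IsClique (B : Set V) := fun u hu w hw huw =>
    (hAdj u w).2 ⟨huw, .inr ⟨hu, hw⟩⟩
  rcases mem_union.mp (hAB ▸ mem_univ v) with hv | hv
  · simpa [hA] using SimpleGraph.choose_two_le_triangleDeg_of_isClique hcliqueA hv
  · simpa [hB] using SimpleGraph.choose_two_le_triangleDeg_of_isClique hcliqueB hv

end TwoCliques

theorem rb2_le_choose_two {t : ℝ} {k : ℕ} (ht : 0 ≤ t) (htk : t ≤ k) : rb2 t ≤ k.choose 2 := by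
  rw [rb2, Nat.cast_choose_two]
  rcases k.eq_zero_or_pos with rfl | hk
  · simp [le_antisymm (by exact_mod_cast htk) ht]
  · have hk : (1 : ℝ) ≤ k := by exact_mod_cast hk
    nlinarith [mul_nonneg (sub_nonneg.mpr htk) (by linarith : (0 : ℝ) ≤ k + t - 1)]

theorem sub_sq_le_fFun {n : ℕ} {t k : ℝ} (ht1 : (n : ℝ) / 2 - 1 ≤ t) (ht2 : t ≤ (n : ℝ) - 1)
    (hk : k ≤ t + 1) : (n : ℝ) * ((n : ℝ) - 1) / 2 - ((n : ℝ) - 1 - k) ^ 2 ≤ fFun n t t + n := by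
  have key : fFun n t t + n - ((n : ℝ) * ((n : ℝ) - 1) / 2 - ((n : ℝ) - 1 - k) ^ 2)
      = (2 * t + 2 - n) + 2 * ((n : ℝ) - 1 - t) * (t + 1 - k) + (k - t) ^ 2 := by
    rw [fFun, rb2, rb2]; ring
  nlinarith [mul_nonneg (sub_nonneg.mpr ht2) (sub_nonneg.mpr hk), sq_nonneg (k - t)]

theorem two_cliques_construction_general (n : ℕ) (t : ℝ)
    (ht1 : (n : ℝ) / 2 - 1 ≤ t) (ht2 : t ≤ (n : ℝ) - 2)
    (V : Type) [Fintype V] [DecidableEq V] (hV : Fintype.card V = n)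
    (A B : Finset V)
    (hA : (A.card : ℤ) = ⌈t⌉ + 1) (hB : (B.card : ℤ) = ⌈t⌉ + 1)
    (hAB : A ∪ B = Finset.univ)
    (G : SimpleGraph V) [DecidableRel G.Adj]
    (hAdj : ∀ u v : V, G.Adj u v ↔
      u ≠ v ∧ ((u ∈ A ∧ v ∈ A) ∨ (u ∈ B ∧ v ∈ B))) :
    (∀ v : V, rb2 t ≤ (triangleDeg G v : ℝ)) ∧
    (G.edgeFinset.card : ℝ)
      = (n : ℝ) * ((n : ℝ) - 1) / 2 - ((n : ℝ) - 1 - (⌈t⌉ : ℝ)) ^ 2 ∧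
    (G.edgeFinset.card : ℝ) ≤ fFun n t t + n := by
  have ht0 : 0 ≤ t := by linarith
  obtain ⟨k, hk⟩ : ∃ k : ℕ, ⌈t⌉ = k := Int.eq_ofNat_of_zero_le (Int.ceil_nonneg ht0)
  have hceil : (⌈t⌉ : ℝ) = k := by exact_mod_cast hk
  have hAk : #A = k + 1 := by omega
  have hBk : #B = k + 1 := by omega
  have hedges := card_edgeFinset_eq_of_card_eq_succ hAB hAdj hAk hBk
  rw [hV] at hedges
  refine ⟨fun v => ?_, by rw [hedges, hceil], ?_⟩
  · refine (rb2_le_choose_two ht0 (hceil ▸ Int.le_ceil t)).trans ?_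
    exact_mod_cast choose_two_le_triangleDeg_of_card_eq_succ hAB hAdj hAk hBk v
  · rw [hedges]
    exact sub_sq_le_fFun ht1 (by linarith) (hceil ▸ (Int.ceil_lt_add_one t).le)

/-- Properties of the construction `G₁`: the union of two complete graphs on
vertex sets `A`, `B` with `|A| = |B| = ⌈t⌉ + 1` covering all `n` vertices.
Every vertex lies in at least `C(t,2)` triangles, `e(G₁) = C(n,2) - (n-1-⌈t⌉)²`,
and `e(G₁) ≤ f(t) + n`. -/
theorem two_cliques_construction (n : ℕ) (hn : 0 < n) (t : ℝ)
    (ht1 : (n : ℝ) / 2 - 1 ≤ t) (ht2 : t ≤ (n : ℝ) - 2)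
    (V : Type) [Fintype V] [DecidableEq V] (hV : Fintype.card V = n)
    (A B : Finset V)
    (hA : (A.card : ℤ) = ⌈t⌉ + 1) (hB : (B.card : ℤ) = ⌈t⌉ + 1)
    (hAB : A ∪ B = Finset.univ)
    (G : SimpleGraph V) [DecidableRel G.Adj]
    (hAdj : ∀ u v : V, G.Adj u v ↔
      u ≠ v ∧ ((u ∈ A ∧ v ∈ A) ∨ (u ∈ B ∧ v ∈ B))) :
    (∀ v : V, rb2 t ≤ (triangleDeg G v : ℝ)) ∧
    (G.edgeFinset.card : ℝ)
      = (n : ℝ) * ((n : ℝ) - 1) / 2 - ((n : ℝ) - 1 - (⌈t⌉ : ℝ)) ^ 2 ∧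
    (G.edgeFinset.card : ℝ) ≤ fFun n t t + n :=
  two_cliques_construction_general n t ht1 ht2 V hV A B hA hB hAB G hAdj
end

section
/- Let n be an even positive integer and t, r real numbers with n/2 − 1 ≤ t ≤ n − 1, 0 ≤ r ≤ n/2, and C(n/2 − 1, 2) + 3·C(r,2) = C(t,2). Let V = A ∪ B be a partition of an n-element vertex set with |A| = |B| = n/2, and let G be the graph consisting of a complete graph on A, a complete graph on B, and any ⌈r⌉-regular bipartite graph between A and B. Then every vertex of G has triangle-degree at least C(n/2 − 1, 2) + 3·C(⌈r⌉, 2), which is at least C(t,2); moreover e(G) = (n/2)(n/2 + ⌈r⌉ − 1) and e(G) ≤ f(n/2 + r − 1) + n/2, where f(x) = C(t,2) + x(n − x) − C(n − x − 1, 2). -/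
lemma aux_deg_tri {V : Type} [Fintype V] [DecidableEq V] (G : SimpleGraph V)
    [DecidableRel G.Adj] (A B : Finset V) (hdisj : Disjoint A B)
    (hAB : A ∪ B = Finset.univ)
    (hcompA : ∀ u ∈ A, ∀ v ∈ A, u ≠ v → G.Adj u v)
    (hcompB : ∀ u ∈ B, ∀ v ∈ B, u ≠ v → G.Adj u v)
    (m : ℕ)
    (hregA : ∀ a ∈ A, (B.filter (fun b => G.Adj a b)).card = m)
    (hregB : ∀ b ∈ B, (A.filter (fun a => G.Adj b a)).card = m)
    (v : V) (hv : v ∈ A) :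
    G.degree v = (A.card - 1) + m ∧
    (A.card - 1).choose 2 + 3 * m.choose 2 ≤ triangleDeg G v := by
  classical
  set Bv := B.filter (fun b => G.Adj v b) with hBvdef
  have hBvcard : Bv.card = m := hregA v hv
  have hBvB : Bv ⊆ B := Finset.filter_subset _ _
  have hvB : v ∉ B := Finset.disjoint_left.1 hdisj hv
  have hvBv : v ∉ Bv := fun h => hvB (hBvB h)
  have hvA : v ∉ A.erase v := Finset.notMem_erase v A
  -- degree
  have hN : G.neighborFinset v = (A.erase v) ∪ Bv := by
    ext u
    simp only [SimpleGraph.mem_neighborFinset, Finset.mem_union, Finset.mem_erase,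
      Finset.mem_filter, hBvdef]
    constructor
    · intro h
      have hu : u ∈ A ∪ B := hAB ▸ Finset.mem_univ u
      rcases Finset.mem_union.1 hu with h1 | h2
      · exact Or.inl ⟨h.ne', h1⟩
      · exact Or.inr ⟨h2, h⟩
    · rintro (⟨hne, hu⟩ | ⟨hu, hadj⟩)
      · exact hcompA v hv u hu (Ne.symm hne)
      · exact hadj
  have hdeg : G.degree v = (A.card - 1) + m := by
    rw [← SimpleGraph.card_neighborFinset_eq_degree, hN,
      Finset.card_union_of_disjoint (hdisj.mono (Finset.erase_subset _ _) hBvB),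
      Finset.card_erase_of_mem hv, hBvcard]
  refine ⟨hdeg, ?_⟩
  -- triangle count
  set T := (G.cliqueFinset 3).filter (fun s => v ∈ s) with hT
  set S1 := (A.erase v).powersetCard 2 with hS1def
  set S2 := Bv.powersetCard 2 with hS2def
  set S3 := Bv.biUnion
      (fun b => ((A.filter (fun a => G.Adj b a)).erase v).image (Prod.mk b)) with hS3def
  set im1 := S1.image (fun s : Finset V => insert v s) with him1def
  set im2 := S2.image (fun s : Finset V => insert v s) with him2def
  set im3 := S3.image (fun p : V × V => insert v (insert p.2 ({p.1} : Finset V))) with him3def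
  -- facts about S3 membership
  have hS3mem : ∀ p : V × V, p ∈ S3 →
      p.1 ∈ Bv ∧ p.2 ∈ A ∧ p.2 ≠ v ∧ G.Adj p.1 p.2 := by
    rintro ⟨b, a⟩ hp
    simp only [hS3def, Finset.mem_biUnion, Finset.mem_image, Finset.mem_erase,
      Finset.mem_filter, Prod.mk.injEq] at hp
    obtain ⟨b', hb', a', ⟨ha'v, ha'A, hadj⟩, hba, haa⟩ := hp
    subst hba; subst haa
    exact ⟨hb', ha'A, ha'v, hadj⟩
  -- im1 facts
  have him1T : ∀ x ∈ im1, x ∈ T ∧ x ∩ B = ∅ := by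
    intro x hx
    obtain ⟨s, hs, rfl⟩ := Finset.mem_image.1 hx
    obtain ⟨hsub, hcard⟩ := Finset.mem_powersetCard.1 hs
    obtain ⟨a, b, hab, rfl⟩ := Finset.card_eq_two.1 hcard
    have haA : a ∈ A := Finset.mem_of_mem_erase (hsub (by simp))
    have hbA : b ∈ A := Finset.mem_of_mem_erase (hsub (by simp))
    have hav : a ≠ v := Finset.ne_of_mem_erase (hsub (by simp))
    have hbv : b ≠ v := Finset.ne_of_mem_erase (hsub (by simp))
    constructor
    · rw [hT, Finset.mem_filter, SimpleGraph.mem_cliqueFinset_iff]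
      refine ⟨SimpleGraph.is3Clique_triple_iff.2
        ⟨hcompA v hv a haA (Ne.symm hav), hcompA v hv b hbA (Ne.symm hbv),
         hcompA a haA b hbA hab⟩, by simp⟩
    · rw [Finset.eq_empty_iff_forall_notMem]
      intro u hu
      rcases Finset.mem_inter.1 hu with ⟨hu1, hu2⟩
      have : u ∈ A := by
        rcases Finset.mem_insert.1 hu1 with h | h
        · exact h ▸ hv
        · rcases Finset.mem_insert.1 h with h' | h'
          · exact h' ▸ haA
          · exact (Finset.mem_singleton.1 h') ▸ hbA
      exact Finset.disjoint_left.1 hdisj this hu2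
  -- im2 facts
  have him2T : ∀ x ∈ im2, x ∈ T ∧ (x ∩ B).card = 2 := by
    intro x hx
    obtain ⟨s, hs, rfl⟩ := Finset.mem_image.1 hx
    obtain ⟨hsub, hcard⟩ := Finset.mem_powersetCard.1 hs
    obtain ⟨a, b, hab, rfl⟩ := Finset.card_eq_two.1 hcard
    have haBv : a ∈ Bv := hsub (by simp)
    have hbBv : b ∈ Bv := hsub (by simp)
    have haB : a ∈ B := hBvB haBv
    have hbB : b ∈ B := hBvB hbBv
    have hva : G.Adj v a := (Finset.mem_filter.1 haBv).2
    have hvb : G.Adj v b := (Finset.mem_filter.1 hbBv).2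
    constructor
    · rw [hT, Finset.mem_filter, SimpleGraph.mem_cliqueFinset_iff]
      exact ⟨SimpleGraph.is3Clique_triple_iff.2
        ⟨hva, hvb, hcompB a haB b hbB hab⟩, by simp⟩
    · have : (insert v {a, b} : Finset V) ∩ B = {a, b} ∩ B := by
        apply Finset.insert_inter_of_notMem hvB
      rw [this, Finset.inter_eq_left.2 (by
        intro u hu
        rcases Finset.mem_insert.1 hu with h | h
        · exact h ▸ haB
        · exact (Finset.mem_singleton.1 h) ▸ hbB)]
      exact Finset.card_eq_two.2 ⟨a, b, hab, rfl⟩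
  -- im3 facts
  have him3T : ∀ x ∈ im3, x ∈ T ∧ (x ∩ B).card = 1 := by
    intro x hx
    obtain ⟨p, hp, rfl⟩ := Finset.mem_image.1 hx
    obtain ⟨hb, haA, hav, hadj⟩ := hS3mem p hp
    obtain ⟨b, a⟩ := p
    simp only at hb haA hav hadj
    have hbB : b ∈ B := hBvB hb
    have hvb : G.Adj v b := (Finset.mem_filter.1 hb).2
    have hba : b ≠ a := fun h => Finset.disjoint_left.1 hdisj haA (h ▸ hbB)
    have hbv : b ≠ v := fun h => hvB (h ▸ hbB)
    constructor
    · rw [hT, Finset.mem_filter, SimpleGraph.mem_cliqueFinset_iff]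
      exact ⟨SimpleGraph.is3Clique_triple_iff.2
        ⟨hcompA v hv a haA (Ne.symm hav), hvb, hadj.symm⟩, by simp⟩
    · have h1 : (insert v (insert a {b}) : Finset V) ∩ B = (insert a {b}) ∩ B :=
        Finset.insert_inter_of_notMem hvB
      have h2 : (insert a ({b} : Finset V)) ∩ B = {b} ∩ B :=
        Finset.insert_inter_of_notMem (fun h => Finset.disjoint_left.1 hdisj haA h)
      have h3 : ({b} : Finset V) ∩ B = {b} := Finset.inter_eq_left.2 (by simpa using hbB)
      simp only [h1, h2, h3, Finset.card_singleton]
  -- subset of T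
  have hsubT : im1 ∪ im2 ∪ im3 ⊆ T := by
    intro x hx
    rcases Finset.mem_union.1 hx with hx | hx
    · rcases Finset.mem_union.1 hx with hx | hx
      · exact (him1T x hx).1
      · exact (him2T x hx).1
    · exact (him3T x hx).1
  -- disjointness
  have hd12 : Disjoint im1 im2 := Finset.disjoint_left.2 (by
    intro x h1 h2
    have := (him1T x h1).2
    have h2' := (him2T x h2).2
    rw [this] at h2'; simp at h2')
  have hd13 : Disjoint im1 im3 := Finset.disjoint_left.2 (by
    intro x h1 h2
    have := (him1T x h1).2
    have h2' := (him3T x h2).2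
    rw [this] at h2'; simp at h2')
  have hd23 : Disjoint im2 im3 := Finset.disjoint_left.2 (by
    intro x h1 h2
    have := (him2T x h1).2
    have h2' := (him3T x h2).2
    rw [this] at h2'; simp at h2')
  -- cards of images
  have hcard1 : im1.card = (A.card - 1).choose 2 := by
    rw [him1def, Finset.card_image_of_injOn, hS1def, Finset.card_powersetCard,
      Finset.card_erase_of_mem hv]
    intro s hs s' hs' h
    have hvs : v ∉ s := fun hvs => hvA ((Finset.mem_powersetCard.1 hs).1 hvs)
    have hvs' : v ∉ s' := fun hvs => hvA ((Finset.mem_powersetCard.1 hs').1 hvs)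
    have h' : insert v s = insert v s' := h
    rw [← Finset.erase_insert hvs, ← Finset.erase_insert hvs', h']
  have hcard2 : im2.card = m.choose 2 := by
    rw [him2def, Finset.card_image_of_injOn, hS2def, Finset.card_powersetCard, hBvcard]
    intro s hs s' hs' h
    have hvs : v ∉ s := fun hvs => hvBv ((Finset.mem_powersetCard.1 hs).1 hvs)
    have hvs' : v ∉ s' := fun hvs => hvBv ((Finset.mem_powersetCard.1 hs').1 hvs)
    have h' : insert v s = insert v s' := h
    rw [← Finset.erase_insert hvs, ← Finset.erase_insert hvs', h']
  have hS3card : S3.card = m * (m - 1) := by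
    rw [hS3def, Finset.card_biUnion]
    · have : ∀ b ∈ Bv, (((A.filter (fun a => G.Adj b a)).erase v).image (Prod.mk b)).card
          = m - 1 := by
        intro b hb
        have hbB : b ∈ B := hBvB hb
        have hvb : G.Adj v b := (Finset.mem_filter.1 hb).2
        rw [Finset.card_image_of_injective _ (fun a a' h => by simpa using h),
          Finset.card_erase_of_mem (Finset.mem_filter.2 ⟨hv, hvb.symm⟩), hregB b hbB]
      rw [Finset.sum_congr rfl this, Finset.sum_const, smul_eq_mul, hBvcard]
    · intro b hb b' hb' hbb'
      simp only [Finset.disjoint_left, Finset.mem_image]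
      rintro p ⟨a, _, rfl⟩ ⟨a', _, h⟩
      exact hbb' (by simpa using congrArg Prod.fst h.symm)
  have hcard3 : im3.card = m * (m - 1) := by
    rw [him3def, Finset.card_image_of_injOn, hS3card]
    rintro ⟨b, a⟩ hp ⟨b', a'⟩ hp' h
    obtain ⟨hb, haA, hav, _⟩ := hS3mem _ hp
    obtain ⟨hb', ha'A, ha'v, _⟩ := hS3mem _ hp'
    simp only at hb haA hav hb' ha'A ha'v h
    have hbB : b ∈ B := hBvB hb
    have hb'B : b' ∈ B := hBvB hb'
    -- b' ∈ {v, a, b}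
    have hb'mem : b' ∈ (insert v (insert a ({b} : Finset V))) := by
      rw [h]; simp
    have hb'b : b' = b := by
      rcases Finset.mem_insert.1 hb'mem with h' | h'
      · exact absurd (h' ▸ hb'B) hvB
      · rcases Finset.mem_insert.1 h' with h'' | h''
        · exact absurd (h'' ▸ hb'B) (fun hh => Finset.disjoint_left.1 hdisj haA hh)
        · exact Finset.mem_singleton.1 h''
    have ha'mem : a' ∈ (insert v (insert a ({b} : Finset V))) := by
      rw [h]; simp
    have ha'a : a' = a := by
      rcases Finset.mem_insert.1 ha'mem with h' | h'
      · exact absurd h' ha'v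
      · rcases Finset.mem_insert.1 h' with h'' | h''
        · exact h''
        · exact absurd ((Finset.mem_singleton.1 h'') ▸ ha'A)
            (fun hh => Finset.disjoint_left.1 hdisj hh hbB)
    simp [hb'b, ha'a]
  -- put it together
  have hunion : (im1 ∪ im2 ∪ im3).card = im1.card + im2.card + im3.card := by
    rw [Finset.card_union_of_disjoint (Finset.disjoint_union_left.2 ⟨hd13, hd23⟩),
      Finset.card_union_of_disjoint hd12]
  have hle : (im1 ∪ im2 ∪ im3).card ≤ T.card := Finset.card_le_card hsubT
  have h2c : m * (m - 1) = 2 * m.choose 2 := by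
    rw [Nat.choose_two_right]
    have : m * (m - 1) % 2 = 0 := by
      rcases Nat.even_or_odd m with h | h
      · exact Nat.even_iff.1 (h.mul_right _)
      · rcases m with _ | k
        · simp
        · have : Even (k + 1 - 1) := by
            simpa using Nat.Odd.sub_odd h odd_one
          exact Nat.even_iff.1 (this.mul_left _)
    omega
  have : triangleDeg G v = T.card := rfl
  rw [this]
  calc (A.card - 1).choose 2 + 3 * m.choose 2
      = (A.card - 1).choose 2 + m.choose 2 + m * (m - 1) := by rw [h2c]; ring
    _ = im1.card + im2.card + im3.card := by rw [hcard1, hcard2, hcard3]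
    _ = (im1 ∪ im2 ∪ im3).card := hunion.symm
    _ ≤ T.card := hle

/-- Properties of the construction `G₂` (for even `n`): two complete graphs on the
parts `A`, `B` of an equipartition of the `n` vertices, together with an
`⌈r⌉`-regular bipartite graph between them. Every vertex lies in at least
`C(n/2-1,2) + 3·C(⌈r⌉,2) ≥ C(t,2)` triangles, `e(G₂) = (n/2)(n/2 + ⌈r⌉ - 1)`,
and `e(G₂) ≤ f(n/2 + r - 1) + n/2`. -/
theorem two_cliques_bipartite_construction (n : ℕ) (hn : 0 < n) (hne : Even n)
    (t r : ℝ) (ht1 : (n : ℝ) / 2 - 1 ≤ t) (ht2 : t ≤ (n : ℝ) - 1)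
    (hr0 : 0 ≤ r) (hr1 : r ≤ (n : ℝ) / 2)
    (heq : rb2 ((n : ℝ) / 2 - 1) + 3 * rb2 r = rb2 t)
    (V : Type) [Fintype V] [DecidableEq V] (hV : Fintype.card V = n)
    (A B : Finset V) (hdisj : Disjoint A B) (hAB : A ∪ B = Finset.univ)
    (hA : (A.card : ℝ) = (n : ℝ) / 2) (hB : (B.card : ℝ) = (n : ℝ) / 2)
    (G : SimpleGraph V) [DecidableRel G.Adj]
    (hcompA : ∀ u ∈ A, ∀ v ∈ A, u ≠ v → G.Adj u v)
    (hcompB : ∀ u ∈ B, ∀ v ∈ B, u ≠ v → G.Adj u v)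
    (hregA : ∀ a ∈ A, ((B.filter (fun b => G.Adj a b)).card : ℤ) = ⌈r⌉)
    (hregB : ∀ b ∈ B, ((A.filter (fun a => G.Adj b a)).card : ℤ) = ⌈r⌉) :
    (∀ v : V, rb2 ((n : ℝ) / 2 - 1) + 3 * rb2 ((⌈r⌉ : ℤ) : ℝ)
        ≤ (triangleDeg G v : ℝ)) ∧
    rb2 t ≤ rb2 ((n : ℝ) / 2 - 1) + 3 * rb2 ((⌈r⌉ : ℤ) : ℝ) ∧
    (G.edgeFinset.card : ℝ)
      = ((n : ℝ) / 2) * ((n : ℝ) / 2 + ((⌈r⌉ : ℤ) : ℝ) - 1) ∧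
    (G.edgeFinset.card : ℝ) ≤ fFun n t ((n : ℝ) / 2 + r - 1) + (n : ℝ) / 2 := by
  classical
  -- basic numerology
  set m : ℕ := ⌈r⌉.toNat with hmdef
  have hceil0 : (0 : ℤ) ≤ ⌈r⌉ := Int.ceil_nonneg hr0
  have hmz : (⌈r⌉ : ℤ) = (m : ℤ) := by rw [hmdef, Int.toNat_of_nonneg hceil0]
  have hmr : ((⌈r⌉ : ℤ) : ℝ) = (m : ℝ) := by exact_mod_cast congrArg (fun z : ℤ => (z : ℝ)) hmz
  obtain ⟨k, hk⟩ := hne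
  have hk1 : 1 ≤ k := by omega
  have hnk : (n : ℝ) = 2 * (k : ℝ) := by rw [hk]; push_cast; ring
  have hAk : A.card = k := by
    have : (A.card : ℝ) = (k : ℝ) := by rw [hA, hnk]; ring
    exact_mod_cast this
  have hBk : B.card = k := by
    have : (B.card : ℝ) = (k : ℝ) := by rw [hB, hnk]; ring
    exact_mod_cast this
  -- nat versions of regularity
  have hregA' : ∀ a ∈ A, (B.filter (fun b => G.Adj a b)).card = m := by
    intro a ha
    have := hregA a ha; rw [hmz] at this; exact_mod_cast this
  have hregB' : ∀ b ∈ B, (A.filter (fun a => G.Adj b a)).card = m := by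
    intro b hb
    have := hregB b hb; rw [hmz] at this; exact_mod_cast this
  -- aux for every vertex
  have haux : ∀ v : V, G.degree v = (k - 1) + m ∧
      (k - 1).choose 2 + 3 * m.choose 2 ≤ triangleDeg G v := by
    intro v
    have hv : v ∈ A ∪ B := hAB ▸ Finset.mem_univ v
    rcases Finset.mem_union.1 hv with hv | hv
    · have := aux_deg_tri G A B hdisj hAB hcompA hcompB m hregA' hregB' v hv
      rwa [hAk] at this
    · have := aux_deg_tri G B A hdisj.symm (by rw [Finset.union_comm]; exact hAB)
        hcompB hcompA m hregB' hregA' v hv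
      rwa [hBk] at this
  -- casts of the binomial quantities
  have hck : rb2 ((n : ℝ) / 2 - 1) = ((k - 1).choose 2 : ℝ) := by
    rw [Nat.cast_choose_two, rb2]
    have : ((k - 1 : ℕ) : ℝ) = (k : ℝ) - 1 := by
      have : (1 : ℕ) ≤ k := hk1
      push_cast [Nat.cast_sub this]; ring
    rw [this, hnk]; ring
  have hcm : rb2 ((⌈r⌉ : ℤ) : ℝ) = (m.choose 2 : ℝ) := by
    rw [Nat.cast_choose_two, rb2, hmr]
  -- Part 1
  have part1 : ∀ v : V, rb2 ((n : ℝ) / 2 - 1) + 3 * rb2 ((⌈r⌉ : ℤ) : ℝ)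
      ≤ (triangleDeg G v : ℝ) := by
    intro v
    rw [hck, hcm]
    have := (haux v).2
    have : (((k - 1).choose 2 + 3 * m.choose 2 : ℕ) : ℝ) ≤ (triangleDeg G v : ℝ) := by
      exact_mod_cast this
    push_cast at this
    linarith
  -- Part 2
  have hrc : r ≤ ((⌈r⌉ : ℤ) : ℝ) := Int.le_ceil r
  have part2 : rb2 t ≤ rb2 ((n : ℝ) / 2 - 1) + 3 * rb2 ((⌈r⌉ : ℤ) : ℝ) := by
    rw [← heq]
    have key : rb2 r ≤ rb2 ((⌈r⌉ : ℤ) : ℝ) := by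
      simp only [rb2]
      rcases le_or_gt 1 (⌈r⌉ : ℤ) with h1 | h1
      · have h1' : (1 : ℝ) ≤ ((⌈r⌉ : ℤ) : ℝ) := by exact_mod_cast h1
        nlinarith [mul_nonneg (sub_nonneg.2 hrc) (show (0:ℝ) ≤ ((⌈r⌉ : ℤ) : ℝ) + r - 1 by linarith)]
      · have h0 : ⌈r⌉ = 0 := by omega
        have hr00 : r ≤ 0 := by
          have := Int.ceil_le.1 (le_of_eq h0)
          simpa using this
        have : r = 0 := le_antisymm hr00 hr0
        rw [this]; simp
    linarith
  -- degree sum / edge count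
  have hdegall : ∀ v : V, G.degree v = (k - 1) + m := fun v => (haux v).1
  have hsum : 2 * G.edgeFinset.card = n * ((k - 1) + m) := by
    rw [← SimpleGraph.sum_degrees_eq_twice_card_edges, Finset.sum_congr rfl
      (fun v _ => hdegall v), Finset.sum_const, smul_eq_mul, Finset.card_univ, hV]
  have hsumR : 2 * (G.edgeFinset.card : ℝ) = (n : ℝ) * (((k : ℝ) - 1) + m) := by
    have h1 : ((k - 1 : ℕ) : ℝ) = (k : ℝ) - 1 := by
      push_cast [Nat.cast_sub hk1]; ring
    have := congrArg (fun x : ℕ => (x : ℝ)) hsum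
    push_cast at this
    rw [Nat.cast_sub hk1] at this
    push_cast at this
    linarith
  have part3 : (G.edgeFinset.card : ℝ)
      = ((n : ℝ) / 2) * ((n : ℝ) / 2 + ((⌈r⌉ : ℤ) : ℝ) - 1) := by
    rw [hmr, hnk]
    rw [hnk] at hsumR
    linear_combination hsumR / 2
  -- Part 4
  have hclt : ((⌈r⌉ : ℤ) : ℝ) ≤ r + 1 := le_of_lt (Int.ceil_lt_add_one r)
  have part4 : (G.edgeFinset.card : ℝ) ≤ fFun n t ((n : ℝ) / 2 + r - 1) + (n : ℝ) / 2 := by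
    have hkey : fFun n t ((n : ℝ) / 2 + r - 1) + (n : ℝ) / 2
        = ((n : ℝ) / 2) * ((n : ℝ) / 2 + r) := by
      have heq' := heq
      simp only [rb2] at heq'
      simp only [fFun, rb2]
      linear_combination - heq'
    rw [hkey, part3]
    have hs0 : (0 : ℝ) ≤ (n : ℝ) / 2 := by positivity
    exact mul_le_mul_of_nonneg_left (by linarith) hs0
  exact ⟨part1, part2, part3, part4⟩
end

section
/- Let t ≥ 2 be an integer and let n > (t+1)²(t+2)/4. Suppose G is a graph on an n-element vertex set V in which every vertex has triangle-degree at least C(t,2), and G has the minimum number of edges among all graphs on V with this property. Then there exists a set S of t + 1 vertices such that S induces a complete graph in G and no vertex of S has a neighbor outside S. -/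
open Finset SimpleGraph

section TriangleDegree

variable {V : Type*} [Fintype V] [DecidableEq V] (G : SimpleGraph V) [DecidableRel G.Adj]

theorem triangleDeg_eq_card_filter_subset_neighborFinset (v : V) :
    triangleDeg G v = #{p ∈ G.cliqueFinset 2 | p ⊆ G.neighborFinset v} := by
  refine card_nbij' (·.erase v) (insert v) (fun s hs => ?_) (fun p hp => ?_)
    (fun s hs => insert_erase (mem_filter.1 hs).2) (fun _ hp => erase_insert fun hv => ?_)
  · obtain ⟨hs, hv⟩ := mem_filter.1 hs
    rw [mem_cliqueFinset_iff] at hs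
    refine mem_filter.2 ⟨mem_cliqueFinset_iff.2 (hs.erase_of_mem hv), fun w hw => ?_⟩
    exact (mem_neighborFinset ..).2 (hs.1 hv (mem_of_mem_erase hw) (ne_of_mem_erase hw).symm)
  · obtain ⟨hp, hpv⟩ := mem_filter.1 hp
    refine mem_filter.2 ⟨mem_cliqueFinset_iff.2 ?_, mem_insert_self v p⟩
    exact (mem_cliqueFinset_iff.1 hp).insert fun w hw => (mem_neighborFinset ..).1 (hpv hw)
  · exact G.notMem_neighborFinset_self v ((mem_filter.1 hp).2 hv)

theorem filter_subset_neighborFinset_subset_powersetCard (v : V) :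
    {p ∈ G.cliqueFinset 2 | p ⊆ G.neighborFinset v} ⊆ (G.neighborFinset v).powersetCard 2 :=
  fun _ hp =>
    mem_powersetCard.2 ⟨(mem_filter.1 hp).2, (mem_cliqueFinset_iff.1 (mem_filter.1 hp).1).2⟩

theorem triangleDeg_le_choose_degree (v : V) : triangleDeg G v ≤ (G.degree v).choose 2 := by
  rw [triangleDeg_eq_card_filter_subset_neighborFinset, ← card_neighborFinset_eq_degree,
    ← card_powersetCard]
  exact card_le_card (filter_subset_neighborFinset_subset_powersetCard G v)

theorem choose_card_sub_one_le_triangleDeg {S : Finset V} (hS : G.IsClique (S : Set V)) {v : V}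
    (hv : v ∈ S) : (#S - 1).choose 2 ≤ triangleDeg G v := by
  rw [triangleDeg_eq_card_filter_subset_neighborFinset, ← card_erase_of_mem hv,
    ← card_powersetCard]
  refine card_le_card fun p hp => ?_
  obtain ⟨hpS, hp2⟩ := mem_powersetCard.1 hp
  refine mem_filter.2 ⟨mem_cliqueFinset_iff.2 ⟨hS.subset ?_, hp2⟩, fun w hw => ?_⟩
  · exact coe_subset.2 (hpS.trans (erase_subset v S))
  · have hw := hpS hw
    exact (mem_neighborFinset ..).2 (hS hv (mem_of_mem_erase hw) (ne_of_mem_erase hw).symm)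

theorem isClique_neighborFinset_of_choose_degree_le_triangleDeg {v : V}
    (h : (G.degree v).choose 2 ≤ triangleDeg G v) : G.IsClique (G.neighborFinset v : Set V) := by
  have hall := eq_of_subset_of_card_le (filter_subset_neighborFinset_subset_powersetCard G v) (by
    rwa [card_powersetCard, card_neighborFinset_eq_degree,
      ← triangleDeg_eq_card_filter_subset_neighborFinset])
  intro a ha b hb hab
  have hpair : {a, b} ∈ (G.neighborFinset v).powersetCard 2 :=
    mem_powersetCard.2 ⟨insert_subset_iff.2 ⟨ha, singleton_subset_iff.2 hb⟩, card_pair hab⟩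
  rw [← hall, mem_filter, mem_cliqueFinset_iff] at hpair
  exact hpair.1.1 (by simp) (by simp) hab

theorem le_degree_of_choose_le_triangleDeg {t : ℕ} (ht : 2 ≤ t) {v : V}
    (h : t.choose 2 ≤ triangleDeg G v) : t ≤ G.degree v := by
  by_contra! hlt
  obtain ⟨m, rfl⟩ : ∃ m, t = m + 1 := ⟨t - 1, by omega⟩
  have hmono : (G.degree v).choose 2 ≤ m.choose 2 := Nat.choose_le_choose 2 (by omega)
  have hsucc : (m + 1).choose 2 = m + m.choose 2 := by
    rw [Nat.choose_succ_succ', Nat.choose_one_right]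
  have := triangleDeg_le_choose_degree G v
  omega

end TriangleDegree

namespace SimpleGraph

variable {V : Type*} [Fintype V] [DecidableEq V] (G : SimpleGraph V) [DecidableRel G.Adj]

theorem degree_lt_card_of_forall_adj_mem {S : Finset V} {v : V} (hv : v ∈ S)
    (h : ∀ w, G.Adj v w → w ∈ S) : G.degree v < #S := by
  rw [← card_neighborFinset_eq_degree, ← card_erase_add_one hv, Nat.lt_succ_iff]
  refine card_le_card fun w hw => ?_
  have hvw := (mem_neighborFinset ..).1 hw
  exact mem_erase.2 ⟨(G.ne_of_adj hvw).symm, h w hvw⟩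

theorem neighborFinset_eq_erase_of_isClique {S : Finset V} (hS : G.IsClique (S : Set V)) {u : V}
    (hu : u ∈ S) (hdeg : G.degree u < #S) : G.neighborFinset u = S.erase u := by
  refine (eq_of_subset_of_card_le (fun w hw => ?_) ?_).symm
  · exact (mem_neighborFinset ..).2 (hS hu (mem_of_mem_erase hw) (ne_of_mem_erase hw).symm)
  · rw [card_erase_of_mem hu, card_neighborFinset_eq_degree]; omega

theorem exists_isolated_clique_of_degree_eq {t : ℕ} {v : V} (hv : G.degree v = t)
    (htri : t.choose 2 ≤ triangleDeg G v) (hnbr : ∀ w, G.Adj v w → G.degree w ≤ t) :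
    ∃ S : Finset V, #S = t + 1 ∧ G.IsClique (S : Set V) ∧ ∀ u ∈ S, ∀ w, G.Adj u w → w ∈ S := by
  set S := insert v (G.neighborFinset v)
  have hcard : #S = t + 1 := by
    rw [card_insert_of_notMem (G.notMem_neighborFinset_self v), card_neighborFinset_eq_degree, hv]
  have hclique : G.IsClique (S : Set V) := by
    rw [coe_insert]
    exact (isClique_neighborFinset_of_choose_degree_le_triangleDeg G (hv ▸ htri)).insert
      fun w hw _ => (mem_neighborFinset ..).1 hw
  refine ⟨S, hcard, hclique, fun u hu w huw => ?_⟩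
  have hdeg : G.degree u < #S := by
    rcases mem_insert.1 hu with rfl | hu
    · omega
    · have := hnbr u ((mem_neighborFinset ..).1 hu); omega
  have hw : w ∈ G.neighborFinset u := (mem_neighborFinset ..).2 huw
  rw [G.neighborFinset_eq_erase_of_isClique hclique hu hdeg] at hw
  exact mem_of_mem_erase hw

theorem card_le_mul_sum_degree_sub (t : ℕ)
    (h : ∀ v, G.degree v ≤ t → ∃ w, G.Adj v w ∧ t < G.degree w) :
    Fintype.card V ≤ (t + 2) * ∑ v, (G.degree v - t) := by
  set H : Finset V := {v | t < G.degree v}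
  have hlow : #{v | ¬ t < G.degree v} ≤ ∑ x ∈ H, G.degree x := calc
    _ ≤ #(H.biUnion fun x => G.neighborFinset x) := card_le_card fun v hv => by
        obtain ⟨w, hvw, hw⟩ := h v (not_lt.1 (mem_filter.1 hv).2)
        exact mem_biUnion.2 ⟨w, mem_filter.2 ⟨mem_univ w, hw⟩, (mem_neighborFinset ..).2 hvw.symm⟩
    _ ≤ ∑ x ∈ H, #(G.neighborFinset x) := card_biUnion_le
    _ = ∑ x ∈ H, G.degree x := by simp only [card_neighborFinset_eq_degree]
  have hhigh : ∀ x ∈ H, 1 + G.degree x ≤ (t + 2) * (G.degree x - t) := fun x hx => by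
    obtain ⟨k, hk⟩ := Nat.exists_eq_add_of_lt (mem_filter.1 hx).2
    rw [hk, show t + k + 1 - t = k + 1 by omega]
    nlinarith
  calc Fintype.card V = #H + #{v | ¬ t < G.degree v} := (card_filter_add_card_filter_not _).symm
    _ ≤ ∑ x ∈ H, (1 + G.degree x) := by
        rw [sum_add_distrib, sum_const, smul_eq_mul, mul_one]; omega
    _ ≤ ∑ x ∈ H, (t + 2) * (G.degree x - t) := sum_le_sum hhigh
    _ ≤ ∑ x, (t + 2) * (G.degree x - t) := sum_le_sum_of_subset (subset_univ H)
    _ = (t + 2) * ∑ x, (G.degree x - t) := (mul_sum ..).symm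

theorem card_le_mul_sum_degree_sub_of_forall_choose_le_triangleDeg {t : ℕ} (ht : 2 ≤ t)
    (hdeg : ∀ v, t.choose 2 ≤ triangleDeg G v)
    (hno : ¬∃ S : Finset V, #S = t + 1 ∧ G.IsClique (S : Set V) ∧ ∀ u ∈ S, ∀ w, G.Adj u w → w ∈ S) :
    Fintype.card V ≤ (t + 2) * ∑ v, (G.degree v - t) :=
  G.card_le_mul_sum_degree_sub t fun v hv => by
    by_contra! hnbr
    exact hno (G.exists_isolated_clique_of_degree_eq
      (le_antisymm hv (le_degree_of_choose_le_triangleDeg G ht (hdeg v))) (hdeg v) hnbr)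

end SimpleGraph

theorem Nat.div_eq_iff_mem_Ico {x k y : ℕ} (hk : 0 < k) :
    x / k = y ↔ x ∈ Ico (y * k) (y * k + k) := by
  rw [Nat.div_eq_iff hk, mem_Ico]
  generalize y * k = a
  omega

section BlockGraph

variable {V : Type*} [Fintype V] {n : ℕ} (e : V ≃ Fin n)

theorem card_filter_equivFin (P : ℕ → Prop) [DecidablePred P] :
    #{v | P (e v)} = #{j ∈ range n | P j} := by
  refine card_bij (fun v _ => (e v : ℕ)) (fun v hv => ?_)
    (fun _ _ _ _ h => e.injective (Fin.ext h)) (fun j hj => ?_)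
  · exact mem_filter.2 ⟨mem_range.2 (e v).2, (mem_filter.1 hv).2⟩
  · obtain ⟨hj, hP⟩ := mem_filter.1 hj
    exact ⟨e.symm ⟨j, mem_range.1 hj⟩, mem_filter.2 ⟨mem_univ _, by simpa using hP⟩, by simp⟩

theorem card_filter_equivFin_mem_Ico {a b : ℕ} (hb : b ≤ n) :
    #{v | (e v : ℕ) ∈ Ico a b} = b - a := by
  rw [card_filter_equivFin e (· ∈ Ico a b), ← Nat.card_Ico a b]
  congr 1
  ext j
  simp only [mem_filter, mem_range, and_iff_right_iff_imp, mem_Ico]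
  omega

variable [DecidableEq V]

theorem degree_lt_of_forall_adj_mem_Ico (G : SimpleGraph V) [DecidableRel G.Adj] {v : V} {a b : ℕ}
    (hv : (e v : ℕ) ∈ Ico a b) (h : ∀ w, G.Adj v w → (e w : ℕ) ∈ Ico a b) : G.degree v < b - a :=
  calc G.degree v < #{u | (e u : ℕ) ∈ Ico a b} :=
        G.degree_lt_card_of_forall_adj_mem (mem_filter.2 ⟨mem_univ v, hv⟩)
          fun w hw => mem_filter.2 ⟨mem_univ w, h w hw⟩
    _ = #{j ∈ range n | j ∈ Ico a b} := card_filter_equivFin e (· ∈ Ico a b)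
    _ ≤ #(Ico a b) := card_le_card fun _ hj => (mem_filter.1 hj).2
    _ = b - a := Nat.card_Ico a b

variable (t s : ℕ)

/-- Cliques on the blocks of `t + 1` consecutive positions `e v`, shifted by `s` so that the first
block is short, together with a clique on the first `t + 1` positions. -/
def blockGraph : SimpleGraph V where
  Adj u v := u ≠ v ∧
    ((e u + s : ℕ) / (t + 1) = (e v + s : ℕ) / (t + 1) ∨ (e u : ℕ) < t + 1 ∧ (e v : ℕ) < t + 1)
  symm := ⟨fun _ _ h => ⟨h.1.symm, h.2.imp Eq.symm And.symm⟩⟩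
  loopless := ⟨fun _ h => h.1 rfl⟩

instance : DecidableRel (blockGraph e t s).Adj := fun _ _ => inferInstanceAs (Decidable (_ ∧ _))

theorem choose_le_triangleDeg_blockGraph (hn : t + 1 ≤ n) (hs : t + 1 ∣ n + s) (v : V) :
    t.choose 2 ≤ triangleDeg (blockGraph e t s) v := by
  obtain ⟨S, hvS, hS, hcard⟩ : ∃ S : Finset V,
      v ∈ S ∧ (blockGraph e t s).IsClique (S : Set V) ∧ #S = t + 1 := by
    by_cases hv : (e v : ℕ) < t + 1
    · refine ⟨({u | (e u : ℕ) ∈ Ico 0 (t + 1)} : Finset V), by simpa using hv,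
        fun a ha b hb hab => ⟨hab, Or.inr ⟨by simpa using ha, by simpa using hb⟩⟩, ?_⟩
      rw [card_filter_equivFin_mem_Ico e hn, Nat.sub_zero]
    · obtain ⟨ℓ, hℓ⟩ : ∃ ℓ, (e v + s : ℕ) / (t + 1) = ℓ := ⟨_, rfl⟩
      have hvℓ := (Nat.div_eq_iff_mem_Ico t.add_one_pos).1 hℓ
      obtain ⟨m, hm⟩ := hs
      have hℓm : ℓ < m := Nat.lt_of_mul_lt_mul_left (a := t + 1) (by
        rw [← hm, mul_comm]; simp only [mem_Ico] at hvℓ; omega)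
      have hblock : ℓ * (t + 1) + (t + 1) ≤ n + s := by
        rw [hm, mul_comm (t + 1), ← Nat.succ_mul]; exact Nat.mul_le_mul_right _ hℓm
      have hsame : ∀ u : V, (e u + s : ℕ) / (t + 1) = ℓ ↔
          (e u : ℕ) ∈ Ico (ℓ * (t + 1) - s) (ℓ * (t + 1) - s + (t + 1)) := fun u => by
        rw [Nat.div_eq_iff_mem_Ico t.add_one_pos]
        simp only [mem_Ico] at hvℓ ⊢
        omega
      refine ⟨({u | (e u : ℕ) ∈ Ico (ℓ * (t + 1) - s) (ℓ * (t + 1) - s + (t + 1))} : Finset V),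
        by simpa using (hsame v).1 hℓ, fun a ha b hb hab => ⟨hab, Or.inl ?_⟩, ?_⟩
      · simp only [coe_filter, mem_univ, true_and, Set.mem_ofPred_eq] at ha hb
        exact ((hsame a).2 ha).trans ((hsame b).2 hb).symm
      · rw [card_filter_equivFin_mem_Ico e (by simp only [mem_Ico] at hvℓ; omega)]
        omega
  simpa [hcard] using choose_card_sub_one_le_triangleDeg _ hS hvS

theorem degree_blockGraph_le (hs : s ≤ t + 1) (v : V) :
    (blockGraph e t s).degree v ≤
      t + if (e v : ℕ) ∈ Ico (t + 1 - s) (t + 1) then t + 1 - s else 0 := by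
  simp only [mem_Ico]
  obtain ⟨ℓ, hℓ⟩ : ∃ ℓ, (e v + s : ℕ) / (t + 1) = ℓ := ⟨_, rfl⟩
  have hsame : ∀ w : V, (e w + s : ℕ) / (t + 1) = ℓ ↔
      ℓ * (t + 1) ≤ e w + s ∧ (e w + s : ℕ) < ℓ * (t + 1) + (t + 1) := fun w => by
    rw [Nat.div_eq_iff_mem_Ico t.add_one_pos, mem_Ico]
  have hv := (hsame v).1 hℓ
  have hadj : ∀ w, (blockGraph e t s).Adj v w →
      ℓ * (t + 1) ≤ e w + s ∧ (e w + s : ℕ) < ℓ * (t + 1) + (t + 1) ∨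
        (e v : ℕ) < t + 1 ∧ (e w : ℕ) < t + 1 :=
    fun w hw => hw.2.imp (fun h => (hsame w).1 (h.symm.trans hℓ)) id
  rcases lt_or_ge (e v + s : ℕ) (t + 1) with hlow | hlow
  · obtain rfl : ℓ = 0 := hℓ ▸ Nat.div_eq_of_lt hlow
    have hnbr : ∀ w, (blockGraph e t s).Adj v w → (e w : ℕ) ∈ Ico 0 (t + 1) := fun w hw => by
      rw [mem_Ico]; rcases hadj w hw with h | h <;> omega
    have := degree_lt_of_forall_adj_mem_Ico e _ (by rw [mem_Ico]; omega) hnbr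
    rw [if_neg (by omega)]
    omega
  rcases lt_or_ge (e v : ℕ) (t + 1) with hF | hF
  · have hℓ1 : ℓ * (t + 1) ≤ t + 1 := by
      have : ℓ < 2 := hℓ ▸ (Nat.div_lt_iff_lt_mul t.add_one_pos).2 (by omega)
      exact (Nat.mul_le_mul_right (t + 1) (by omega : ℓ ≤ 1)).trans_eq (one_mul _)
    have hnbr : ∀ w, (blockGraph e t s).Adj v w → (e w : ℕ) ∈ Ico 0 (2 * (t + 1) - s) :=
      fun w hw => by rw [mem_Ico]; rcases hadj w hw with h | h <;> omega
    have := degree_lt_of_forall_adj_mem_Ico e _ (by rw [mem_Ico]; omega) hnbr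
    rw [if_pos (by omega)]
    omega
  · have hnbr : ∀ w, (blockGraph e t s).Adj v w →
        (e w : ℕ) ∈ Ico (ℓ * (t + 1) - s) (ℓ * (t + 1) - s + (t + 1)) :=
      fun w hw => by rw [mem_Ico]; rcases hadj w hw with h | h <;> omega
    have := degree_lt_of_forall_adj_mem_Ico e _ (by rw [mem_Ico]; omega) hnbr
    rw [if_neg (by omega)]
    omega

theorem sum_degree_blockGraph_le (hs : s ≤ t + 1) (hn : t + 1 ≤ n) :
    ∑ v, (blockGraph e t s).degree v ≤ n * t + s * (t + 1 - s) :=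
  calc ∑ v, (blockGraph e t s).degree v
      ≤ ∑ v, (t + if (e v : ℕ) ∈ Ico (t + 1 - s) (t + 1) then t + 1 - s else 0) :=
        sum_le_sum fun v _ => degree_blockGraph_le e t s hs v
    _ = n * t + s * (t + 1 - s) := by
        rw [sum_add_distrib, sum_const, card_univ, Fintype.card_congr e, Fintype.card_fin,
          smul_eq_mul, sum_ite, sum_const, sum_const_zero, smul_eq_mul, add_zero,
          card_filter_equivFin_mem_Ico e hn, Nat.sub_sub_self hs]

theorem exists_choose_le_triangleDeg_and_sum_degree_le {t : ℕ} (hn : t + 1 ≤ Fintype.card V) :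
    ∃ (G₀ : SimpleGraph V) (_ : DecidableRel G₀.Adj), (∀ v, t.choose 2 ≤ triangleDeg G₀ v) ∧
      4 * ∑ v, G₀.degree v ≤ 4 * (Fintype.card V * t) + (t + 1) ^ 2 := by
  set s := t + 1 - Fintype.card V % (t + 1)
  have hs : s ≤ t + 1 := Nat.sub_le _ _
  have hdvd : t + 1 ∣ Fintype.card V + s := by
    have := Nat.mod_lt (Fintype.card V) t.add_one_pos
    have := Nat.mod_le (Fintype.card V) (t + 1)
    rw [show Fintype.card V + s = Fintype.card V - Fintype.card V % (t + 1) + (t + 1) by omega]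
    exact (Nat.dvd_sub_mod _).add dvd_rfl
  let e := Fintype.equivFin V
  refine ⟨blockGraph e t s, inferInstance, choose_le_triangleDeg_blockGraph e t s hn hdvd, ?_⟩
  have hsum := sum_degree_blockGraph_le e t s hs hn
  have hamgm := four_mul_le_sq_add s (t + 1 - s)
  rw [Nat.add_sub_cancel' hs, mul_assoc] at hamgm
  omega

end BlockGraph

/-- Proposition 3.2: for `n > (t+1)²(t+2)/4`, every extremal graph (edge-minimal
among `n`-vertex graphs in which every vertex lies in at least `C(t,2)` triangles)
contains an isolated copy of `K_{t+1}`. -/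
theorem extremal_contains_isolated_clique (t : ℕ) (ht : 2 ≤ t)
    (V : Type) [Fintype V] [DecidableEq V] (n : ℕ) (hV : Fintype.card V = n)
    (hn : ((t + 1 : ℝ)) ^ 2 * ((t : ℝ) + 2) / 4 < (n : ℝ))
    (G : SimpleGraph V) [DecidableRel G.Adj]
    (hdeg : ∀ v : V, Nat.choose t 2 ≤ triangleDeg G v)
    (hmin : ∀ (G' : SimpleGraph V) (_ : DecidableRel G'.Adj),
      (∀ v : V, Nat.choose t 2 ≤ triangleDeg G' v) →
      G.edgeFinset.card ≤ G'.edgeFinset.card) :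
    ∃ S : Finset V, S.card = t + 1 ∧
      (∀ u ∈ S, ∀ v ∈ S, u ≠ v → G.Adj u v) ∧
      (∀ u ∈ S, ∀ v : V, G.Adj u v → v ∈ S) := by
  by_contra hno
  have hlow : ∀ v, t ≤ G.degree v := fun v => le_degree_of_choose_le_triangleDeg G ht (hdeg v)
  have hcharge : n ≤ (t + 2) * ∑ v, (G.degree v - t) :=
    hV ▸ G.card_le_mul_sum_degree_sub_of_forall_choose_le_triangleDeg ht hdeg
      fun ⟨S, hcard, hS, hiso⟩ => hno ⟨S, hcard, fun u hu w hw => hS hu hw, hiso⟩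
  have htR : (2 : ℝ) ≤ t := by exact_mod_cast ht
  have htn : t + 1 ≤ n := by
    have : (t + 1 : ℝ) < n := lt_of_le_of_lt (by nlinarith) hn
    exact_mod_cast this.le
  obtain ⟨G₀, _, hG₀, hsum₀⟩ := exists_choose_le_triangleDeg_and_sum_degree_le (hV ▸ htn)
  have hexcess : ∑ v, (G.degree v - t) + n * t = ∑ v, G.degree v := by
    rw [← hV, ← smul_eq_mul, ← card_univ, ← sum_const, ← sum_add_distrib]
    exact sum_congr rfl fun v _ => Nat.sub_add_cancel (hlow v)
  have hsum : ∑ v, G.degree v ≤ ∑ v, G₀.degree v := by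
    simpa only [sum_degrees_eq_twice_card_edges] using
      Nat.mul_le_mul_left 2 (hmin G₀ inferInstance hG₀)
  have hexcess_le : 4 * ∑ v, (G.degree v - t) ≤ (t + 1) ^ 2 := by rw [hV] at hsum₀; omega
  have hbound : 4 * n ≤ (t + 2) * (t + 1) ^ 2 := by nlinarith
  have : (4 * n : ℝ) ≤ ((t : ℝ) + 2) * ((t : ℝ) + 1) ^ 2 := by exact_mod_cast hbound
  linarith
end
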